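/- arXiv:math/0405154 — 9 statements merged into one kernel-verified Lean document; each statement's English description precedes it below -/
import Mathlib

section
/- Let f(z) = Σ_{n≥1} f_n z^n have nonnegative real coefficients and suppose it converges absolutely on the circle |z| = λ^{-1} with f(λ^{-1}) = 1. If z is a complex number with |z| = λ^{-1} and f(z) = 1, then z = ω λ^{-1} where ω is a root of unity whose order q divides every n with f_n ≠ 0. In particular, if gcd{n : f_n ≠ 0} = 1, then z = λ^{-1} is the only solution on this circle. -/
/-!
Since `Re w ≤ ‖w‖` termwise, `∑ f_n z^n = 1 = ∑ f_n ‖z‖^n` forces `f_n z^n = f_n ‖z‖^n` for every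
`n`, i.e. `(λ z)^n = 1` whenever `f_n ≠ 0`. As `f_0 = 0` and `f ≠ 0`, some such `n` is positive, so
`ω = λ z` is a root of unity whose order divides every `n` in the support of `f`.
-/

theorem RCLike.eq_norm_of_tsum_eq_tsum_norm {𝕜 ι : Type*} [RCLike 𝕜] {w : ι → 𝕜}
    (hw : Summable fun i => ‖w i‖) (h : ∑' i, w i = ((∑' i, ‖w i‖ : ℝ) : 𝕜)) (i : ι) :
    w i = ‖w i‖ := by
  rw [← norm_le_re_iff_eq_norm]
  by_contra! hi
  have hsum : Summable w := hw.of_norm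
  refine (Summable.tsum_lt_tsum (fun j => re_le_norm (w j)) hi
    (reCLM.summable hsum) hw).ne ?_
  rw [← re_tsum (𝕜 := 𝕜) hsum, h, ofReal_re]

theorem Complex.pow_eq_norm_pow_of_tsum_eq {f : ℕ → ℝ} {z : ℂ} (hf : ∀ n, 0 ≤ f n)
    (hs : Summable fun n => f n * ‖z‖ ^ n)
    (h : ∑' n, (f n : ℂ) * z ^ n = ((∑' n, f n * ‖z‖ ^ n : ℝ) : ℂ)) {n : ℕ} (hn : f n ≠ 0) :
    z ^ n = (‖z‖ : ℂ) ^ n := by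
  have hnorm : ∀ m, ‖(f m : ℂ) * z ^ m‖ = f m * ‖z‖ ^ m := fun m => by
    rw [norm_mul, norm_pow, norm_real, Real.norm_of_nonneg (hf m)]
  have := RCLike.eq_norm_of_tsum_eq_tsum_norm (w := fun m => (f m : ℂ) * z ^ m)
    (by simpa only [hnorm] using hs) (by simp only [hnorm]; exact h) n
  simp only [hnorm] at this
  push_cast at this
  exact mul_left_cancel₀ (ofReal_ne_zero.mpr hn) this

/-- Let `f(z) = Σ_{n≥1} f_n z^n` have nonnegative real coefficients,
absolutely convergent on the circle `|z| = λ⁻¹`, with `f(λ⁻¹) = 1`.  If `z ∈ ℂ`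
satisfies `|z| = λ⁻¹` and `f(z) = 1`, then `z = ω·λ⁻¹` where `ω` is a root of unity
whose order divides every `n` with `f_n ≠ 0`.  In particular, if
`gcd{n : f_n ≠ 0} = 1`, then `z = λ⁻¹`. -/
theorem stmt1 (f : ℕ → ℝ) (lam : ℝ) (z : ℂ)
    (hf0 : f 0 = 0) (hfnonneg : ∀ n, 0 ≤ f n) (hlam : 0 < lam)
    (habs : Summable fun n : ℕ => f n * lam⁻¹ ^ n)
    (hval : ∑' n : ℕ, f n * lam⁻¹ ^ n = 1)
    (hz : ‖z‖ = lam⁻¹)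
    (hfz : ∑' n : ℕ, (f n : ℂ) * z ^ n = 1) :
    (∃ ω : ℂ, ∃ q : ℕ, 0 < q ∧ orderOf ω = q ∧ ω ^ q = 1 ∧
      z = ω * (lam⁻¹ : ℂ) ∧ ∀ n, f n ≠ 0 → q ∣ n) ∧
    ((∀ d : ℕ, (∀ n, f n ≠ 0 → d ∣ n) → d = 1) → z = (lam⁻¹ : ℂ)) := by
  have hlamC : (lam : ℂ) ≠ 0 := Complex.ofReal_ne_zero.mpr hlam.ne'
  set ω : ℂ := lam * z
  have hω : ∀ n, f n ≠ 0 → ω ^ n = 1 := fun n hn => by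
    have := Complex.pow_eq_norm_pow_of_tsum_eq hfnonneg (hz ▸ habs)
      (by rw [hfz, hz, hval, Complex.ofReal_one]) hn
    rw [hz, Complex.ofReal_inv] at this
    rw [mul_pow, this, ← mul_pow, mul_inv_cancel₀ hlamC, one_pow]
  obtain ⟨n₀, hn₀⟩ : ∃ n, f n ≠ 0 := by
    by_contra! h
    simp [h] at hval
  have hfin : IsOfFinOrder ω := isOfFinOrder_iff_pow_eq_one.mpr
    ⟨n₀, Nat.pos_of_ne_zero fun h => hn₀ (h ▸ hf0), hω n₀ hn₀⟩
  have hdvd : ∀ n, f n ≠ 0 → orderOf ω ∣ n := fun n hn => orderOf_dvd_of_pow_eq_one (hω n hn)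
  have hzω : z = ω * (lam⁻¹ : ℂ) := by simp only [ω]; field_simp
  refine ⟨⟨ω, _, hfin.orderOf_pos, rfl, pow_orderOf_eq_one ω, hzω, hdvd⟩, fun hgcd => ?_⟩
  rw [hzω, orderOf_eq_one_iff.mp (hgcd _ hdvd), one_mul]
end

section
/- Let (a_n) and (b_n) be sequences of integers related by a_n = Σ_{k|n} k·b_k (equivalently, by Möbius inversion, n·b_n = Σ_{k|n} μ(n/k)·a_k). If b_n ≠ 0 for infinitely many n, then limsup |a_n|^{1/n} = limsup |b_n|^{1/n}. -/
/-!
Write `growth(u) = limsup (log uₙ) / n` (Mathlib's `ExpGrowth.expGrowthSup`), so that the two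
limsups in the theorem are `exp (growth |a|)` and `exp (growth |b|)`. A factor `n + 1` does
not change the growth, and passing to partial sums `∑_{k ≤ n}` does not increase a nonnegative
growth. Since `|a n| ≤ (n + 1) ∑_{k ≤ n} |b k|`, and by Möbius inversion
`n |b n| ≤ ∑_{k ≤ n} |a k|`, each growth bounds the other, provided both are nonnegative.
For integer sequences this holds as soon as infinitely many terms are nonzero: true for `b` by
hypothesis, and for `a` because otherwise `n |b n|` would be bounded.
-/

open Filter ENNReal Finset ExpGrowth

lemma EReal.eq_zero_of_two_mul_le {x : EReal} (h0 : 0 ≤ x) (htop : x ≠ ⊤)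
    (h : 2 * x ≤ x) : x = 0 := by
  induction x using EReal.rec with
  | bot => exact absurd h0 (by simp)
  | top => exact absurd rfl htop
  | coe r =>
    have h' : ((2 * r : ℝ) : EReal) ≤ r := by rw [EReal.coe_mul]; exact h
    rw [EReal.coe_le_coe_iff] at h'
    rw [EReal.coe_nonneg] at h0
    exact_mod_cast (by linarith : r = 0)

namespace ExpGrowth

lemma log_limsup_rpow_one_div (u : ℕ → ℝ≥0∞) :
    log (atTop.limsup fun n : ℕ => u n ^ (1 / (n : ℝ))) = expGrowthSup u := by
  rw [← logOrderIso_apply, logOrderIso.limsup_apply]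
  refine limsup_congr (Eventually.of_forall fun n => ?_)
  rw [logOrderIso_apply, log_rpow, one_div, EReal.coe_inv, EReal.coe_natCast, mul_comm]
  rfl

lemma expGrowthSup_natCast_add_one : expGrowthSup (fun n : ℕ => (n + 1 : ℝ≥0∞)) = 0 := by
  have hmono : Monotone (fun n : ℕ => (n + 1 : ℝ≥0∞)) := fun _ _ h => by
    dsimp only; gcongr
  have hle_log_two : expGrowthSup (fun n : ℕ => (n + 1 : ℝ≥0∞)) ≤ log 2 := by
    rw [← expGrowthSup_pow]
    exact expGrowthSup_monotone fun n => by exact_mod_cast Nat.lt_two_pow_self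
  -- Since `2 n + 1 ≤ 2 (n + 1)`, sampling along `2 n`, which doubles the growth, does not
  -- increase it.
  have hdouble : ((2 : ℕ) : EReal) * expGrowthSup (fun n : ℕ => (n + 1 : ℝ≥0∞)) ≤
      expGrowthSup (fun n : ℕ => (n + 1 : ℝ≥0∞)) := by
    rw [← hmono.expGrowthSup_comp_mul two_ne_zero]
    refine expGrowthSup_le_of_eventually_le (b := 2) ofNat_ne_top
      (Eventually.of_forall fun n => ?_)
    push_cast
    rw [mul_add, mul_one]
    gcongr
    norm_num
  exact EReal.eq_zero_of_two_mul_le (hmono.expGrowthSup_nonneg (by simp [funext_iff]))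
    (hle_log_two.trans_lt (by simp)).ne (by exact_mod_cast hdouble)

lemma expGrowthSup_natCast_add_one_mul (u : ℕ → ℝ≥0∞) :
    expGrowthSup (fun n => (n + 1 : ℝ≥0∞) * u n) = expGrowthSup u := by
  refine le_antisymm ?_ (expGrowthSup_monotone fun n => le_mul_of_one_le_left' le_add_self)
  have h := expGrowthSup_mul_le (u := fun n : ℕ => (n + 1 : ℝ≥0∞)) (v := u)
    (by simp [expGrowthSup_natCast_add_one]) (by simp [expGrowthSup_natCast_add_one])
  rwa [expGrowthSup_natCast_add_one, zero_add] at h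

lemma expGrowthSup_sum_range_le {v : ℕ → ℝ≥0∞} (hv : ∀ n, v n ≠ ∞)
    (h0 : 0 ≤ expGrowthSup v) :
    expGrowthSup (fun n => ∑ k ∈ range (n + 1), v k) ≤ expGrowthSup v := by
  refine le_of_forall_gt_imp_ge_of_dense fun c hc => ?_
  obtain ⟨N, hN⟩ := eventually_atTop.mp (eventually_le_exp hc)
  have hexp : 1 ≤ c.exp := by simpa using h0.trans hc.le
  set S := ∑ k ∈ range N, v k
  have hterm : ∀ n, ∀ k ∈ range (n + 1), v k ≤ S + c.exp ^ n := by
    intro n k hk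
    rcases lt_or_ge k N with hkN | hNk
    · exact (single_le_sum (fun _ _ => zero_le) (mem_range.2 hkN)).trans le_self_add
    · calc v k ≤ c.exp ^ k := by rw [← EReal.exp_nmul, mul_comm]; exact hN k hNk
        _ ≤ c.exp ^ n := pow_le_pow_right₀ hexp (Nat.lt_succ_iff.1 (mem_range.1 hk))
        _ ≤ S + c.exp ^ n := le_add_self
  have hsum : ∀ n, ∑ k ∈ range (n + 1), v k ≤ (S + 1) * ((n + 1) * c.exp ^ n) := fun n =>
    calc ∑ k ∈ range (n + 1), v k ≤ ∑ _k ∈ range (n + 1), (S + c.exp ^ n) :=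
          sum_le_sum (hterm n)
      _ = (n + 1) * (S + c.exp ^ n) := by
          simp only [sum_const, card_range, nsmul_eq_mul, Nat.cast_add, Nat.cast_one]
      _ ≤ (n + 1) * (S * c.exp ^ n + c.exp ^ n) := by
          gcongr; exact le_mul_of_one_le_right' (one_le_pow₀ hexp)
      _ = (S + 1) * ((n + 1) * c.exp ^ n) := by ring
  calc expGrowthSup (fun n => ∑ k ∈ range (n + 1), v k)
      ≤ expGrowthSup (fun n => (n + 1 : ℝ≥0∞) * c.exp ^ n) :=
        expGrowthSup_le_of_eventually_le
          (add_ne_top.2 ⟨sum_ne_top.2 fun k _ => hv k, one_ne_top⟩) (Eventually.of_forall hsum)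
    _ = c := by rw [expGrowthSup_natCast_add_one_mul, expGrowthSup_pow, EReal.log_exp]

lemma zero_le_expGrowthSup_natCast {u : ℕ → ℕ} (h : ∃ᶠ n in atTop, u n ≠ 0) :
    0 ≤ expGrowthSup (fun n => (u n : ℝ≥0∞)) :=
  Frequently.le_expGrowthSup (h.mono fun n hn => by simpa [Nat.one_le_iff_ne_zero] using hn)

lemma expGrowthSup_le_of_le_mul_sum_range {u v : ℕ → ℕ} (hv : ∃ᶠ n in atTop, v n ≠ 0)
    (h : ∀ᶠ n in atTop, u n ≤ (n + 1) * ∑ k ∈ range (n + 1), v k) :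
    expGrowthSup (fun n => (u n : ℝ≥0∞)) ≤ expGrowthSup (fun n => (v n : ℝ≥0∞)) :=
  calc expGrowthSup (fun n => (u n : ℝ≥0∞))
      ≤ expGrowthSup
          (fun n => (n + 1 : ℝ≥0∞) * ∑ k ∈ range (n + 1), (v k : ℝ≥0∞)) :=
        expGrowthSup_eventually_monotone <| h.mono fun n hn => by dsimp only; exact_mod_cast hn
    _ = expGrowthSup (fun n => ∑ k ∈ range (n + 1), (v k : ℝ≥0∞)) :=
        expGrowthSup_natCast_add_one_mul _
    _ ≤ expGrowthSup (fun n => (v n : ℝ≥0∞)) :=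
        expGrowthSup_sum_range_le (fun _ => natCast_ne_top _) (zero_le_expGrowthSup_natCast hv)

end ExpGrowth

lemma natAbs_sum_divisors_le (f : ℕ → ℤ) (n : ℕ) :
    (∑ d ∈ n.divisors, f d).natAbs ≤ ∑ k ∈ range (n + 1), (f k).natAbs :=
  (Int.natAbs_sum_le _ _).trans <| sum_le_sum_of_subset fun _ hd =>
    mem_range.2 (Nat.lt_succ_of_le (Nat.divisor_le hd))

lemma natAbs_le_mul_sum_range_of_eq_sum_divisors {a b : ℕ → ℤ} {n : ℕ}
    (h : a n = ∑ k ∈ n.divisors, (k : ℤ) * b k) :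
    (a n).natAbs ≤ (n + 1) * ∑ k ∈ range (n + 1), (b k).natAbs := by
  rw [h, mul_sum]
  refine (natAbs_sum_divisors_le _ n).trans (sum_le_sum fun k hk => ?_)
  rw [Int.natAbs_mul, Int.natAbs_natCast]
  exact Nat.mul_le_mul_right _ (mem_range.1 hk).le

lemma mul_natAbs_le_sum_range_of_sum_divisors_eq {a b : ℕ → ℤ}
    (hab : ∀ n : ℕ, 0 < n → ∑ k ∈ n.divisors, (k : ℤ) * b k = a n) {n : ℕ}
    (hn : 0 < n) :
    n * (b n).natAbs ≤ ∑ k ∈ range (n + 1), (a k).natAbs := by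
  have hinv := ArithmeticFunction.sum_eq_iff_sum_mul_moebius_eq.1 hab n hn
  simp only [Int.cast_id] at hinv
  rw [Nat.sum_divisorsAntidiagonal' (fun x y => (ArithmeticFunction.moebius x : ℤ) * a y)] at hinv
  rw [show n * (b n).natAbs = ((n : ℤ) * b n).natAbs by rw [Int.natAbs_mul, Int.natAbs_natCast],
    ← hinv]
  refine (natAbs_sum_divisors_le _ n).trans (sum_le_sum fun k _ => ?_)
  rw [Int.natAbs_mul]
  have hμ := ArithmeticFunction.abs_moebius_le_one (n := n / k)
  rw [Int.abs_eq_natAbs] at hμ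
  exact mul_le_of_le_one_left' (by exact_mod_cast hμ)

lemma eventually_eq_zero_of_mul_le_sum_range {u v : ℕ → ℕ} (hv : ∀ᶠ n in atTop, v n = 0)
    (h : ∀ᶠ n in atTop, n * u n ≤ ∑ k ∈ range (n + 1), v k) :
    ∀ᶠ n in atTop, u n = 0 := by
  obtain ⟨N, hN⟩ := eventually_atTop.mp hv
  set S := ∑ k ∈ range N, v k
  have hsum : ∀ n ≥ N, ∑ k ∈ range (n + 1), v k = S := fun n hn =>
    (sum_subset (range_subset_range.2 (by omega)) fun k _ hk => hN k (by simpa using hk)).symm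
  filter_upwards [h, eventually_ge_atTop N, eventually_gt_atTop S] with n hn hNn hSn
  by_contra hu
  have := Nat.le_mul_of_pos_right n (Nat.pos_of_ne_zero hu)
  rw [hsum n hNn] at hn
  omega

/-- Let `(a_n)`, `(b_n)` be integer sequences with
`a_n = Σ_{k|n} k·b_k` for all `n ≥ 1` (equivalently, by Möbius inversion,
`n·b_n = Σ_{k|n} μ(n/k)·a_k`).  If `b_n ≠ 0` for infinitely many `n`, then
`limsup |a_n|^{1/n} = limsup |b_n|^{1/n}` (computed in `[0,∞]`). -/
theorem stmt2 (a b : ℕ → ℤ)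
    (hab : ∀ n : ℕ, 1 ≤ n → a n = ∑ k ∈ n.divisors, (k : ℤ) * b k)
    (hinf : {n : ℕ | b n ≠ 0}.Infinite) :
    Filter.atTop.limsup (fun n : ℕ => ((a n).natAbs : ℝ≥0∞) ^ (1 / (n : ℝ))) =
      Filter.atTop.limsup (fun n : ℕ => ((b n).natAbs : ℝ≥0∞) ^ (1 / (n : ℝ))) := by
  refine log_injective ?_
  rw [log_limsup_rpow_one_div, log_limsup_rpow_one_div]
  have hb : ∃ᶠ n in atTop, (b n).natAbs ≠ 0 := by
    simpa using Nat.frequently_atTop_iff_infinite.2 hinf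
  have hba : ∀ᶠ n in atTop, n * (b n).natAbs ≤ ∑ k ∈ range (n + 1), (a k).natAbs :=
    (eventually_gt_atTop 0).mono fun n hn =>
      mul_natAbs_le_sum_range_of_sum_divisors_eq (fun m hm => (hab m hm).symm) hn
  have ha : ∃ᶠ n in atTop, (a n).natAbs ≠ 0 := by
    contrapose! hb
    exact eventually_eq_zero_of_mul_le_sum_range hb hba
  apply le_antisymm
  · exact expGrowthSup_le_of_le_mul_sum_range hb <| (eventually_gt_atTop 0).mono fun n hn =>
      natAbs_le_mul_sum_range_of_eq_sum_divisors (hab n hn)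
  · exact expGrowthSup_le_of_le_mul_sum_range ha <| (hba.and (eventually_gt_atTop 0)).mono
      fun n ⟨h, hn⟩ =>
        (Nat.le_mul_of_pos_left _ hn).trans (h.trans (Nat.le_mul_of_pos_left _ n.succ_pos))
end

section
/- Let f and g be power series with nonnegative integer coefficients and zero constant term, each convergent on a disk of radius strictly greater than 1/λ (where λ > 1), with f(1/λ) = g(1/λ) = 1, and assume both 1/(1-f) and 1/(1-g) have, on some disk of radius r > 1/λ, a unique pole at z = 1/λ which is simple. Define a_n by exp(Σ_{n≥1} (a_n/n) z^n) = (1-g(z))/(1-f(z)) as formal power series. Then limsup |a_n|^{1/n} < λ. -/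
open Filter ENNReal Metric FormalMultilinearSeries
open scoped NNReal Topology

/-! Near `0` the quotient `(1 - g)/(1 - f)` equals `u_g/u_f`, which is holomorphic and
nonvanishing on `|z| < r`. Hence `L' = (u_g/u_f)'/(u_g/u_f)` is holomorphic there, and `a (n+1)` is
its `n`-th Taylor coefficient at `0`. Cauchy's estimate on a circle of radius `ρ ∈ (1/λ, r)` gives
`|a n| ≤ C ρ⁻ⁿ`, so `limsup |a n|^(1/n) ≤ 1/ρ < λ`. -/

theorem ENNReal.limsup_rpow_one_div_le_of_le_mul_pow {x : ℕ → ℝ≥0∞} {C t : ℝ≥0∞} (hC : C ≠ ∞)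
    (h : ∀ᶠ n in atTop, x n ≤ C * t ^ n) :
    limsup (fun n : ℕ => x n ^ (1 / (n : ℝ))) atTop ≤ t := by
  lift C to ℝ≥0 using hC
  -- `C + 1` rather than `C`, so that the `n`-th roots tend to `1` even when `C = 0`.
  have hroot : Tendsto (fun n : ℕ => ((C + 1 : ℝ≥0) : ℝ≥0∞) ^ (1 / (n : ℝ))) atTop (𝓝 1) := by
    have := (tendsto_const_nhds (x := C + 1)).nnrpow tendsto_one_div_atTop_nhds_zero_nat
      (Or.inl (by positivity))
    rw [NNReal.rpow_zero] at this
    simpa [ENNReal.coe_rpow_of_ne_zero (show C + 1 ≠ 0 by positivity)] using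
      (ENNReal.tendsto_coe.2 this)
  have hle : ∀ᶠ n : ℕ in atTop,
      x n ^ (1 / (n : ℝ)) ≤ ((C + 1 : ℝ≥0) : ℝ≥0∞) ^ (1 / (n : ℝ)) * t := by
    filter_upwards [h, eventually_ne_atTop 0] with n hn hn0
    calc x n ^ (1 / (n : ℝ)) ≤ (((C + 1 : ℝ≥0) : ℝ≥0∞) * t ^ n) ^ (1 / (n : ℝ)) := by
          gcongr
          exact hn.trans (by gcongr; simp)
      _ = ((C + 1 : ℝ≥0) : ℝ≥0∞) ^ (1 / (n : ℝ)) * t := by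
          rw [ENNReal.mul_rpow_of_nonneg _ _ (by positivity), one_div,
            ENNReal.pow_rpow_inv_natCast hn0]
  calc limsup (fun n : ℕ => x n ^ (1 / (n : ℝ))) atTop
      ≤ limsup (fun n : ℕ => ((C + 1 : ℝ≥0) : ℝ≥0∞) ^ (1 / (n : ℝ)) * t) atTop :=
        limsup_le_limsup hle
    _ = t := by simpa using (ENNReal.Tendsto.mul_const hroot (Or.inl one_ne_zero)).limsup_eq

theorem limsup_enorm_rpow_one_div_le_of_norm_succ_le {E : Type*} [SeminormedAddGroup E]
    {b : ℕ → E} {M ρ : ℝ} (hρ : 0 < ρ) (h : ∀ n, ‖b (n + 1)‖ ≤ M / ρ ^ n) :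
    limsup (fun n : ℕ => ‖b n‖ₑ ^ (1 / (n : ℝ))) atTop ≤ ENNReal.ofReal ρ⁻¹ := by
  refine ENNReal.limsup_rpow_one_div_le_of_le_mul_pow (C := ENNReal.ofReal (M * ρ))
    ofReal_ne_top ?_
  filter_upwards [eventually_ne_atTop 0] with n hn
  obtain ⟨m, rfl⟩ := Nat.exists_eq_add_one_of_ne_zero hn
  rw [← ofReal_norm, ← ENNReal.ofReal_pow (by positivity), ← ENNReal.ofReal_mul' (by positivity)]
  refine ENNReal.ofReal_le_ofReal ((h m).trans_eq ?_)
  rw [inv_pow, pow_succ]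
  field_simp
theorem hasFPowerSeriesOnBall_ofScalars_of_hasSum {𝕜 : Type*} [RCLike 𝕜] {c : ℕ → 𝕜}
    {f : 𝕜 → 𝕜} {ε : ℝ} (hε : 0 < ε)
    (h : ∀ z : 𝕜, ‖z‖ < ε → HasSum (fun n => c n * z ^ n) (f z)) :
    HasFPowerSeriesOnBall f (ofScalars 𝕜 c) 0 (ENNReal.ofReal ε) where
  r_le := ENNReal.le_of_forall_nnreal_lt fun ρ hρ => by
    have hρε : ‖((ρ : ℝ) : 𝕜)‖ < ε := by
      simpa using (ENNReal.ofReal_lt_ofReal_iff hε).1 (by simpa using hρ)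
    refine (ofScalars 𝕜 c).le_radius_of_tendsto (l := 0) ?_
    simpa [ofScalars_norm] using (h _ hρε).summable.tendsto_atTop_zero.norm
  r_pos := ENNReal.ofReal_pos.2 hε
  hasSum {y} hy := by
    rw [Metric.mem_eball, edist_zero_right, ← ofReal_norm, ENNReal.ofReal_lt_ofReal_iff hε] at hy
    simpa [ofScalars_apply_eq, mul_comm] using h y hy

theorem HasFPowerSeriesAt.ofScalars_eq_iteratedDeriv_div_factorial {𝕜 : Type*}
    [NontriviallyNormedField 𝕜] [CompleteSpace 𝕜] [CharZero 𝕜] {c : ℕ → 𝕜} {f : 𝕜 → 𝕜} {x : 𝕜}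
    (hf : HasFPowerSeriesAt f (ofScalars 𝕜 c) x) (n : ℕ) :
    c n = iteratedDeriv n f x / n.factorial :=
  congrFun (ofScalars_series_injective 𝕜 𝕜
    (hf.eq_formalMultilinearSeries hf.analyticAt.hasFPowerSeriesAt)) n

theorem HasFPowerSeriesAt.succ_mul_ofScalars_eq_iteratedDeriv_deriv {𝕜 : Type*}
    [NontriviallyNormedField 𝕜] [CompleteSpace 𝕜] [CharZero 𝕜] {c : ℕ → 𝕜} {f : 𝕜 → 𝕜} {x : 𝕜}
    (hf : HasFPowerSeriesAt f (ofScalars 𝕜 c) x) (n : ℕ) :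
    (n + 1) * c (n + 1) = iteratedDeriv n (deriv f) x / n.factorial := by
  rw [hf.ofScalars_eq_iteratedDeriv_div_factorial, iteratedDeriv_succ', Nat.factorial_succ]
  push_cast
  field_simp

theorem Filter.EventuallyEq.deriv_eq_logDeriv_of_exp {f g : ℂ → ℂ} {x : ℂ}
    (hf : ∀ᶠ z in 𝓝 x, DifferentiableAt ℂ f z) (h : (fun z => Complex.exp (f z)) =ᶠ[𝓝 x] g) :
    deriv f =ᶠ[𝓝 x] logDeriv g := by
  filter_upwards [hf, h.eventuallyEq_nhds] with z hfz hz
  rw [← (logDeriv_congr_nhds hz).eq_of_nhds, logDeriv_apply, deriv_cexp hfz]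
  field_simp [Complex.exp_ne_zero]

theorem Complex.exists_norm_iteratedDeriv_div_factorial_le {f : ℂ → ℂ} {c : ℂ} {r ρ : ℝ}
    (hf : DifferentiableOn ℂ f (ball c r)) (hρ : 0 < ρ) (hρr : ρ < r) :
    ∃ M, ∀ n, ‖iteratedDeriv n f c / n.factorial‖ ≤ M / ρ ^ n := by
  have hsub : closedBall c ρ ⊆ ball c r := closedBall_subset_ball hρr
  obtain ⟨M, hM⟩ := (isCompact_sphere c ρ).exists_bound_of_continuousOn
    ((hf.mono (sphere_subset_closedBall.trans hsub)).continuousOn)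
  refine ⟨M, fun n => ?_⟩
  have := norm_iteratedDeriv_le_of_forall_mem_sphere_norm_le n hρ
    ((hf.mono (closure_ball_subset_closedBall.trans hsub)).diffContOnCl) hM
  rw [norm_div, Complex.norm_natCast, div_le_iff₀ (by positivity)]
  exact this.trans_eq (by ring)

theorem exists_norm_succ_mul_coeff_le_of_exp_eventuallyEq {c : ℕ → ℂ} {L R : ℂ → ℂ} {r ρ : ℝ}
    (hL : HasFPowerSeriesAt L (ofScalars ℂ c) 0)
    (hR : DifferentiableOn ℂ R (ball 0 r)) (hR0 : ∀ z ∈ ball 0 r, R z ≠ 0)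
    (hexp : (fun z => Complex.exp (L z)) =ᶠ[𝓝 0] R) (hρ : 0 < ρ) (hρr : ρ < r) :
    ∃ M, ∀ n : ℕ, ‖(n + 1) * c (n + 1)‖ ≤ M / ρ ^ n := by
  have hlogR : DifferentiableOn ℂ (logDeriv R) (ball 0 r) :=
    (hR.deriv isOpen_ball).div hR hR0
  obtain ⟨M, hM⟩ := Complex.exists_norm_iteratedDeriv_div_factorial_le hlogR hρ hρr
  have hderiv : deriv L =ᶠ[𝓝 0] logDeriv R :=
    Filter.EventuallyEq.deriv_eq_logDeriv_of_exp
      (hL.analyticAt.eventually_analyticAt.mono fun _ hz => hz.differentiableAt) hexp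
  refine ⟨M, fun n => ?_⟩
  rw [hL.succ_mul_ofScalars_eq_iteratedDeriv_deriv, hderiv.iteratedDeriv_eq]
  exact hM n

theorem stmt3_general (f g : ℕ → ℕ) (a : ℕ → ℤ) (lam r : ℝ)
    (hlam : 1 < lam) (hr : lam⁻¹ < r)
    (hfpole : ∃ u : ℂ → ℂ, DifferentiableOn ℂ u (ball (0 : ℂ) r) ∧
      (∀ z ∈ ball (0 : ℂ) r, u z ≠ 0) ∧
      ∀ z ∈ ball (0 : ℂ) r,
        1 - ∑' n : ℕ, (f n : ℂ) * z ^ n = (1 - (lam : ℂ) * z) * u z)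
    (hgpole : ∃ u : ℂ → ℂ, DifferentiableOn ℂ u (ball (0 : ℂ) r) ∧
      (∀ z ∈ ball (0 : ℂ) r, u z ≠ 0) ∧
      ∀ z ∈ ball (0 : ℂ) r,
        1 - ∑' n : ℕ, (g n : ℂ) * z ^ n = (1 - (lam : ℂ) * z) * u z)
    (ha : ∃ ε > (0 : ℝ), ∃ L : ℂ → ℂ, ∀ z : ℂ, ‖z‖ < ε →
      HasSum (fun n : ℕ => (a n : ℂ) / (n : ℂ) * z ^ n) (L z) ∧
      Complex.exp (L z) =
        (1 - ∑' n : ℕ, (g n : ℂ) * z ^ n) / (1 - ∑' n : ℕ, (f n : ℂ) * z ^ n)) :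
    Filter.atTop.limsup (fun n : ℕ => (((a n).natAbs : ℝ≥0∞)) ^ (1 / (n : ℝ)))
      < ENNReal.ofReal lam := by
  obtain ⟨uf, hufd, hufne, huf⟩ := hfpole
  obtain ⟨ug, hugd, hugne, hug⟩ := hgpole
  obtain ⟨ε, hε, L, hL⟩ := ha
  have hlam0 : 0 < lam := one_pos.trans hlam
  obtain ⟨ρ, hlamρ, hρr⟩ := exists_between hr
  have hρ : 0 < ρ := (inv_pos.2 hlam0).trans hlamρ
  have hexp : (fun z => Complex.exp (L z)) =ᶠ[𝓝 0] fun z => ug z / uf z := by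
    have hfactor : ∀ᶠ z : ℂ in 𝓝 0, 1 - (lam : ℂ) * z ≠ 0 :=
      (by fun_prop : Continuous fun z : ℂ => 1 - (lam : ℂ) * z).continuousAt.eventually_ne
        (by simp)
    filter_upwards [ball_mem_nhds 0 hε, ball_mem_nhds (0 : ℂ) (hρ.trans hρr), hfactor]
      with z hzε hzr hz
    rw [(hL z (mem_ball_zero_iff.1 hzε)).2, huf z hzr, hug z hzr, mul_div_mul_left _ _ hz]
  obtain ⟨M, hM⟩ := exists_norm_succ_mul_coeff_le_of_exp_eventuallyEq
    (hasFPowerSeriesOnBall_ofScalars_of_hasSum hε fun z hz => (hL z hz).1).hasFPowerSeriesAt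
    (hugd.div hufd hufne) (fun z hz => div_ne_zero (hugne z hz) (hufne z hz)) hexp hρ hρr
  have ha_le (n : ℕ) : ‖(a (n + 1) : ℂ)‖ ≤ M / ρ ^ n := by
    have hn := hM n
    push_cast at hn
    rwa [mul_div_cancel₀ _ (Nat.cast_add_one_ne_zero n)] at hn
  have ha_enorm (n : ℕ) : ((a n).natAbs : ℝ≥0∞) = ‖(a n : ℂ)‖ₑ := by
    rw [← ofReal_norm, Complex.norm_intCast, ← ENNReal.ofReal_natCast, Nat.cast_natAbs,
      Int.cast_abs]
  calc _ ≤ ENNReal.ofReal ρ⁻¹ := by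
        simpa only [ha_enorm] using limsup_enorm_rpow_one_div_le_of_norm_succ_le hρ ha_le
    _ < ENNReal.ofReal lam := by
      rw [ENNReal.ofReal_lt_ofReal_iff hlam0]
      exact inv_lt_of_inv_lt₀ hlam0 hlamρ

/-- Let `f, g ∈ z·ℤ≥0[[z]]` converge on a disk of radius
`r > 1/λ` (`λ > 1`), with `f(1/λ) = g(1/λ) = 1`, and assume each of
`1/(1−f)`, `1/(1−g)` has, on the disk `|z| < r`, a unique pole at `z = 1/λ`
which is simple (expressed by factorizations `1 − f(z) = (1 − λz)·u(z)` with
`u` holomorphic and nonvanishing, and similarly for `g`).  Define `(a_n)` by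
`exp(Σ_{n≥1} (a_n/n) z^n) = (1−g(z))/(1−f(z))` near `0`.  Then
`limsup |a_n|^{1/n} < λ`. -/
theorem stmt3 (f g : ℕ → ℕ) (a : ℕ → ℤ) (lam r : ℝ)
    (hf0 : f 0 = 0) (hg0 : g 0 = 0)
    (hlam : 1 < lam) (hr : lam⁻¹ < r)
    (hfs : Summable fun n : ℕ => (f n : ℝ) * r ^ n)
    (hgs : Summable fun n : ℕ => (g n : ℝ) * r ^ n)
    (hf1 : ∑' n : ℕ, (f n : ℝ) * lam⁻¹ ^ n = 1)
    (hg1 : ∑' n : ℕ, (g n : ℝ) * lam⁻¹ ^ n = 1)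
    (hfpole : ∃ u : ℂ → ℂ, DifferentiableOn ℂ u (ball (0 : ℂ) r) ∧
      (∀ z ∈ ball (0 : ℂ) r, u z ≠ 0) ∧
      ∀ z ∈ ball (0 : ℂ) r,
        1 - ∑' n : ℕ, (f n : ℂ) * z ^ n = (1 - (lam : ℂ) * z) * u z)
    (hgpole : ∃ u : ℂ → ℂ, DifferentiableOn ℂ u (ball (0 : ℂ) r) ∧
      (∀ z ∈ ball (0 : ℂ) r, u z ≠ 0) ∧
      ∀ z ∈ ball (0 : ℂ) r,
        1 - ∑' n : ℕ, (g n : ℂ) * z ^ n = (1 - (lam : ℂ) * z) * u z)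
    (ha : ∃ ε > (0 : ℝ), ∃ L : ℂ → ℂ, ∀ z : ℂ, ‖z‖ < ε →
      HasSum (fun n : ℕ => (a n : ℂ) / (n : ℂ) * z ^ n) (L z) ∧
      Complex.exp (L z) =
        (1 - ∑' n : ℕ, (g n : ℂ) * z ^ n) / (1 - ∑' n : ℕ, (f n : ℂ) * z ^ n)) :
    Filter.atTop.limsup (fun n : ℕ => (((a n).natAbs : ℝ≥0∞)) ^ (1 / (n : ℝ)))
      < ENNReal.ofReal lam :=
  stmt3_general f g a lam r hlam hr hfpole hgpole ha
end

section
/- Let f ∈ z·ℤ≥0[[z]] and define f^{(k+1)} by 1 − f^{(k+1)}(z) = (1 − f^{(k)}(z))/(1 − z^{r_k}) with f^{(1)} = f, for a nondecreasing sequence (r_k) of positive integers tending to infinity with the positivity condition f^{(k)}_{r_k} ≥ 1 for all k. Then each f^{(k)} has nonnegative integer coefficients, and for every n the sequence (f^{(k)}_n)_k is eventually constant; moreover f^{(k+1)}_m = f^{(k)}_m − 1 if m = r_k, and f^{(k+1)}_m = f^{(k)}_m if m < r_k. -/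
open PowerSeries

/-!
Multiplying the recursion by `1 - X ^ r` gives `G = F - X ^ r + X ^ r * G` for consecutive terms
`F = f^{(k)}`, `G = f^{(k+1)}` and `r = r_k`. Reading off coefficients, `G` agrees with `F` below
degree `r`, loses `1` at degree `r`, and above `r` its coefficient is that of `F` plus an earlier
coefficient of `G`; so nonnegative integrality passes from `F` to `G` by strong induction on the
degree, as long as `F_r ≥ 1`. Since `r_k → ∞`, each coefficient is eventually never touched again.
-/

section Recursion

variable {K : Type*} [Field K] {F G : K⟦X⟧} {r : ℕ}

theorem eq_sub_X_pow_add_X_pow_mul (hr : 0 < r) (h : 1 - G = (1 - F) * (1 - X ^ r)⁻¹) :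
    G = F - X ^ r + X ^ r * G := by
  have hmul := (eq_mul_inv_iff_mul_eq (by simp [hr.ne'])).mp h
  linear_combination -hmul

theorem coeff_eq_of_lt (hr : 0 < r) (h : 1 - G = (1 - F) * (1 - X ^ r)⁻¹) {n : ℕ}
    (hn : n < r) : coeff n G = coeff n F := by
  rw [eq_sub_X_pow_add_X_pow_mul hr h]
  simp [coeff_X_pow, coeff_X_pow_mul', hn.ne, hn.not_ge]

theorem coeff_self_eq (hr : 0 < r) (h : 1 - G = (1 - F) * (1 - X ^ r)⁻¹) :
    coeff r G = coeff r F - 1 + coeff 0 G := by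
  conv_lhs => rw [eq_sub_X_pow_add_X_pow_mul hr h]
  simp [coeff_X_pow_mul']

theorem coeff_eq_add_of_lt (hr : 0 < r) (h : 1 - G = (1 - F) * (1 - X ^ r)⁻¹) {n : ℕ}
    (hn : r < n) : coeff n G = coeff n F + coeff (n - r) G := by
  conv_lhs => rw [eq_sub_X_pow_add_X_pow_mul hr h]
  simp [coeff_X_pow, coeff_X_pow_mul', hn.ne', hn.le]

theorem exists_natCast_coeff_of_one_sub_eq [LinearOrder K] [IsStrictOrderedRing K]
    (hr : 0 < r) (h : 1 - G = (1 - F) * (1 - X ^ r)⁻¹)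
    (hF : ∀ n, ∃ m : ℕ, coeff n F = m) (hFr : 1 ≤ coeff r F) (n : ℕ) :
    ∃ m : ℕ, coeff n G = m := by
  induction n using Nat.strong_induction_on with
  | _ n ih =>
    rcases lt_trichotomy n r with hn | rfl | hn
    · rw [coeff_eq_of_lt hr h hn]
      exact hF n
    · obtain ⟨a, ha⟩ := hF n
      obtain ⟨b, hb⟩ := ih 0 hr
      have ha1 : 1 ≤ a := by exact_mod_cast ha ▸ hFr
      exact ⟨a - 1 + b, by rw [coeff_self_eq hr h, ha, hb]; push_cast [ha1]; ring⟩
    · obtain ⟨a, ha⟩ := hF n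
      obtain ⟨b, hb⟩ := ih (n - r) (Nat.sub_lt (hr.trans hn) hr)
      exact ⟨a + b, by rw [coeff_eq_add_of_lt hr h hn, ha, hb]; push_cast; ring⟩

end Recursion

theorem stmt5_general (f : PowerSeries ℚ) (F : ℕ → PowerSeries ℚ) (r : ℕ → ℕ)
    (hf0 : PowerSeries.constantCoeff (R := ℚ) f = 0)
    (hfnat : ∀ n, ∃ m : ℕ, PowerSeries.coeff (R := ℚ) n f = m)
    (hrpos : ∀ k, 0 < r k)
    (hrtop : Filter.Tendsto r Filter.atTop Filter.atTop)
    (hF0 : F 0 = f)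
    (hFrec : ∀ k, 1 - F (k + 1) = (1 - F k) * (1 - X ^ r k)⁻¹)
    (hpos : ∀ k, 1 ≤ PowerSeries.coeff (R := ℚ) (r k) (F k)) :
    (∀ k n, ∃ m : ℕ, PowerSeries.coeff (R := ℚ) n (F k) = m) ∧
    (∀ n, ∃ K, ∀ k, K ≤ k →
      PowerSeries.coeff (R := ℚ) n (F k) = PowerSeries.coeff (R := ℚ) n (F K)) ∧
    (∀ k, PowerSeries.coeff (R := ℚ) (r k) (F (k + 1)) =
      PowerSeries.coeff (R := ℚ) (r k) (F k) - 1) ∧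
    (∀ k m, m < r k → PowerSeries.coeff (R := ℚ) m (F (k + 1)) =
      PowerSeries.coeff (R := ℚ) m (F k)) := by
  have coeff_lt k {m} (hm : m < r k) := coeff_eq_of_lt (hrpos k) (hFrec k) hm
  have coeff_zero k : coeff 0 (F k) = 0 := by
    induction k with
    | zero => simpa [hF0] using hf0
    | succ k ih => rw [coeff_lt k (hrpos k), ih]
  refine ⟨fun k => ?_, fun n => ?_, fun k => ?_, fun k m => coeff_lt k⟩
  · induction k with
    | zero => simpa [hF0] using hfnat
    | succ k ih => exact exists_natCast_coeff_of_one_sub_eq (hrpos k) (hFrec k) ih (hpos k)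
  · refine Filter.eventuallyConst_atTop.mp (Filter.eventuallyConst_atTop_nat.mpr ?_)
    obtain ⟨K, hK⟩ := Filter.eventually_atTop.mp (hrtop.eventually_gt_atTop n)
    exact ⟨K, fun k hk => coeff_lt k (hK k hk)⟩
  · rw [coeff_self_eq (hrpos k) (hFrec k), coeff_zero, add_zero]

/-- Let `f ∈ z·ℤ≥0[[z]]` (viewed in `ℚ[[z]]`) and define
`f^{(k+1)}` by `1 − f^{(k+1)} = (1 − f^{(k)})/(1 − z^{r_k})`, `f^{(0)} = f`,
for a nondecreasing sequence `(r_k)` of positive integers tending to infinity,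
with the positivity condition `f^{(k)}_{r_k} ≥ 1`.  Then each `f^{(k)}` has
nonnegative integer coefficients; for each `n` the sequence `(f^{(k)}_n)_k` is
eventually constant; `f^{(k+1)}_{r_k} = f^{(k)}_{r_k} − 1`; and
`f^{(k+1)}_m = f^{(k)}_m` for `m < r_k`. -/
theorem stmt5 (f : PowerSeries ℚ) (F : ℕ → PowerSeries ℚ) (r : ℕ → ℕ)
    (hf0 : PowerSeries.constantCoeff (R := ℚ) f = 0)
    (hfnat : ∀ n, ∃ m : ℕ, PowerSeries.coeff (R := ℚ) n f = m)
    (hrpos : ∀ k, 0 < r k) (hrmono : Monotone r)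
    (hrtop : Filter.Tendsto r Filter.atTop Filter.atTop)
    (hF0 : F 0 = f)
    (hFrec : ∀ k, 1 - F (k + 1) = (1 - F k) * (1 - X ^ r k)⁻¹)
    (hpos : ∀ k, 1 ≤ PowerSeries.coeff (R := ℚ) (r k) (F k)) :
    (∀ k n, ∃ m : ℕ, PowerSeries.coeff (R := ℚ) n (F k) = m) ∧
    (∀ n, ∃ K, ∀ k, K ≤ k →
      PowerSeries.coeff (R := ℚ) n (F k) = PowerSeries.coeff (R := ℚ) n (F K)) ∧
    (∀ k, PowerSeries.coeff (R := ℚ) (r k) (F (k + 1)) =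
      PowerSeries.coeff (R := ℚ) (r k) (F k) - 1) ∧
    (∀ k m, m < r k → PowerSeries.coeff (R := ℚ) m (F (k + 1)) =
      PowerSeries.coeff (R := ℚ) m (F k)) :=
  stmt5_general f F r hf0 hfnat hrpos hrtop hF0 hFrec hpos
end

section
/- With the hypotheses of the loops construction (f ∈ z·ℤ≥0[[z]], nondecreasing (r_k) → ∞ satisfying the positivity condition, R_n = #{k : r_k = n}, and f^{<∞>} the coefficientwise limit of the f^{(k)}), the formal power series identity 1 − f^{<∞>}(z) = (1 − f(z)) / ∏_{n=1}^∞ (1 − z^n)^{R_n} holds. -/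
open PowerSeries Finset

/-!
Unwinding the recursion gives `(1 - F K) * ∏_{k < K} (1 - X ^ r k) = 1 - f` for every `K`.
Modulo `X ^ (N + 1)`, once `K` is so large that `r k > N` for `k ≥ K` and the coefficients of
`F K` up to degree `N` have stabilised, the factor `1 - F K` becomes `1 - f^{<∞>}`, the factors
with `r k > N` become `1`, and the remaining ones regroup by the value `n = r k` into
`∏_{n ≤ N} (1 - X ^ n) ^ R n`.
-/

theorem PowerSeries.quotient_mk_span_X_pow_eq_iff {A : Type*} [CommRing A] {n : ℕ}
    {a b : A⟦X⟧} :
    Ideal.Quotient.mk (Ideal.span {(X : A⟦X⟧) ^ n}) a = Ideal.Quotient.mk _ b ↔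
      ∀ m < n, coeff m a = coeff m b := by
  simp only [Ideal.Quotient.eq, Ideal.mem_span_singleton, X_pow_dvd_iff, map_sub, sub_eq_zero]

theorem one_sub_mul_prod_range_one_sub_X_pow {𝕜 : Type*} [Field 𝕜] {F : ℕ → 𝕜⟦X⟧}
    {r : ℕ → ℕ} (hrpos : ∀ k, 0 < r k)
    (hFrec : ∀ k, 1 - F (k + 1) = (1 - F k) * (1 - X ^ r k)⁻¹) (K : ℕ) :
    (1 - F K) * ∏ k ∈ range K, (1 - (X : 𝕜⟦X⟧) ^ r k) = 1 - F 0 := by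
  induction K with
  | zero => simp
  | succ K ih =>
    have hunit : constantCoeff (1 - (X : 𝕜⟦X⟧) ^ r K) ≠ 0 := by
      simp [zero_pow (hrpos K).ne']
    have hstep : (1 - F (K + 1)) * (1 - X ^ r K) = 1 - F K := by
      rw [hFrec K, mul_assoc, PowerSeries.inv_mul_cancel _ hunit, mul_one]
    rw [prod_range_succ, mul_comm _ (1 - X ^ r K), ← mul_assoc, hstep, ih]

theorem prod_filter_range_eq_prod_Icc_pow_card {M : Type*} [CommMonoid M] (g : ℕ → M)
    {r : ℕ → ℕ} (hrpos : ∀ k, 0 < r k) {N K : ℕ} (hK : ∀ k, K ≤ k → N < r k) :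
    ∏ k ∈ (range K).filter (fun k => r k ≤ N), g (r k) =
      ∏ n ∈ Icc 1 N, g n ^ Nat.card {k | r k = n} := by
  have hmaps : ∀ k ∈ (range K).filter (fun k => r k ≤ N), r k ∈ Icc 1 N := fun k hk =>
    mem_Icc.mpr ⟨hrpos k, (mem_filter.mp hk).2⟩
  rw [← prod_fiberwise_of_maps_to' hmaps g]
  refine prod_congr rfl fun n hn => ?_
  have hnN : n ≤ N := (mem_Icc.mp hn).2
  have hlt : ∀ k, r k = n → k < K := fun k hk => by
    by_contra! hKk
    exact (hK k hKk).not_ge (hk ▸ hnN)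
  have hfiber : {k | r k = n} = ↑((range K).filter (fun k => r k ≤ N ∧ r k = n)) := by
    ext k
    simp only [Set.mem_ofPred_eq, coe_filter, mem_range]
    exact ⟨fun hk => ⟨hlt k hk, hk ▸ hnN, hk⟩, fun hk => hk.2.2⟩
  rw [prod_const, hfiber, Nat.card_coe_set_eq, Set.ncard_coe_finset, filter_filter]

theorem stmt6_general (f : PowerSeries ℚ) (F : ℕ → PowerSeries ℚ) (r : ℕ → ℕ)
    (R : ℕ → ℕ) (finf : ℕ → ℕ)
    (hrpos : ∀ k, 0 < r k)
    (hrtop : Filter.Tendsto r Filter.atTop Filter.atTop)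
    (hF0 : F 0 = f)
    (hFrec : ∀ k, 1 - F (k + 1) = (1 - F k) * (1 - X ^ r k)⁻¹)
    (hR : ∀ n, R n = Nat.card {k | r k = n})
    (hstab : ∀ n, ∃ K, ∀ k, K ≤ k → PowerSeries.coeff (R := ℚ) n (F k) = (finf n : ℚ)) :
    ∀ N : ℕ, ∀ m ≤ N,
      PowerSeries.coeff (R := ℚ) m
        ((1 - PowerSeries.mk fun n => (finf n : ℚ)) *
          ∏ n ∈ Finset.Icc 1 N, (1 - X ^ n) ^ R n) =
      PowerSeries.coeff (R := ℚ) m (1 - f) := by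
  intro N m hm
  obtain ⟨K, hK⟩ : ∃ K, ∀ k, K ≤ k →
      N < r k ∧ ∀ n ∈ range (N + 1), coeff n (F k) = (finf n : ℚ) :=
    Filter.eventually_atTop.mp <| (hrtop.eventually_gt_atTop N).and <|
      (Filter.eventually_all_finset _).mpr fun n _ => Filter.eventually_atTop.mpr (hstab n)
  let φ := Ideal.Quotient.mk (Ideal.span {(X : ℚ⟦X⟧) ^ (N + 1)})
  have hlimit : φ (1 - mk fun n => (finf n : ℚ)) = φ (1 - F K) :=
    quotient_mk_span_X_pow_eq_iff.mpr fun n hn => by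
      simp [(hK K le_rfl).2 n (mem_range.mpr hn)]
  have htail : φ (∏ k ∈ (range K).filter (fun k => ¬ r k ≤ N), (1 - X ^ r k)) = 1 := by
    refine (map_prod φ _ _).trans (prod_eq_one fun k hk => ?_)
    have hX : φ (X ^ r k) = 0 := Ideal.Quotient.eq_zero_iff_mem.mpr <|
      Ideal.mem_span_singleton.mpr <| pow_dvd_pow _ (not_le.mp (mem_filter.mp hk).2)
    rw [map_sub, map_one, hX, sub_zero]
  have hhead := prod_filter_range_eq_prod_Icc_pow_card (fun n => 1 - (X : ℚ⟦X⟧) ^ n) hrpos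
    fun k hk => (hK k hk).1
  simp only [← hR] at hhead
  refine quotient_mk_span_X_pow_eq_iff.mp ?_ m (Nat.lt_succ_of_le hm)
  rw [← hF0, ← one_sub_mul_prod_range_one_sub_X_pow hrpos hFrec K,
    ← prod_filter_mul_prod_filter_not (range K) (fun k => r k ≤ N), hhead,
    map_mul, map_mul, map_mul, hlimit, htail, mul_one]

/-- In the loops construction (`f ∈ z·ℤ≥0[[z]]`, nondecreasing
`(r_k) → ∞` with the positivity condition, `R_n = #{k : r_k = n}`, and
`f^{<∞>}` the coefficientwise limit of the stages `f^{(k)}`), the formal power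
series identity `1 − f^{<∞>} = (1 − f) / ∏_{n≥1} (1 − z^n)^{R_n}` holds;
equivalently, for every `N` the coefficients of degree `≤ N` of
`(1 − f^{<∞>})·∏_{n=1}^{N}(1 − z^n)^{R_n}` and of `1 − f` agree
(factors with `n > N` do not affect these coefficients). -/
theorem stmt6 (f : PowerSeries ℚ) (F : ℕ → PowerSeries ℚ) (r : ℕ → ℕ)
    (R : ℕ → ℕ) (finf : ℕ → ℕ)
    (hf0 : PowerSeries.constantCoeff (R := ℚ) f = 0)
    (hfnat : ∀ n, ∃ m : ℕ, PowerSeries.coeff (R := ℚ) n f = m)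
    (hrpos : ∀ k, 0 < r k) (hrmono : Monotone r)
    (hrtop : Filter.Tendsto r Filter.atTop Filter.atTop)
    (hF0 : F 0 = f)
    (hFrec : ∀ k, 1 - F (k + 1) = (1 - F k) * (1 - X ^ r k)⁻¹)
    (hpos : ∀ k, 1 ≤ PowerSeries.coeff (R := ℚ) (r k) (F k))
    (hRfin : ∀ n, {k | r k = n}.Finite)
    (hR : ∀ n, R n = Nat.card {k | r k = n})
    (hstab : ∀ n, ∃ K, ∀ k, K ≤ k → PowerSeries.coeff (R := ℚ) n (F k) = (finf n : ℚ)) :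
    ∀ N : ℕ, ∀ m ≤ N,
      PowerSeries.coeff (R := ℚ) m
        ((1 - PowerSeries.mk fun n => (finf n : ℚ)) *
          ∏ n ∈ Finset.Icc 1 N, (1 - X ^ n) ^ R n) =
      PowerSeries.coeff (R := ℚ) m (1 - f) :=
  stmt6_general f F r R finf hrpos hrtop hF0 hFrec hR hstab
end

section
/- Let f(z) = Σ f_n z^n ∈ z·ℤ≥0[[z]] define a loop shift σ_f of finite entropy log λ > 0 which is strongly positive recurrent (limsup f_n^{1/n} < λ) and mixing (gcd{n : f_n ≠ 0} = 1). Then the zeta function ζ(z) = 1/(1 − f(z)) is holomorphic in |z| < 1/λ and (1 − λz)·ζ(z) extends to a holomorphic nonvanishing function on some disk |z| < r with r > 1/λ. -/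
open Filter ENNReal Metric

/-! Write `F z = ∑ fₙ zⁿ` and `c = λ⁻¹`. Strong positive recurrence makes `F` converge, hence
holomorphic, on a disc of radius `R > c`. For `‖z‖ < c` we have `‖F z‖ ≤ F ‖z‖ < F c = 1`, so
`1 - F` has no zero there. If `‖z‖ = c` and `F z = 1`, comparing real parts term by term forces
`zⁿ = cⁿ` whenever `fₙ ≠ 0`, and aperiodicity then gives `z = c`. The zero at `c` is simple because
`F' c = ∑ n fₙ cⁿ⁻¹ > 0`. So the slope `φ = (1 - F) / (z - c)` is holomorphic and zero-free on the
closed disc of radius `c`, hence by compactness on a slightly larger open disc, and `g = -λ / φ`. -/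

theorem ENNReal.eventually_le_pow_of_limsup_rpow_lt {a : ℕ → ℝ≥0∞} {b : ℝ≥0∞}
    (h : limsup (fun n : ℕ => a n ^ (1 / (n : ℝ))) atTop < b) :
    ∀ᶠ n in atTop, a n ≤ b ^ n := by
  filter_upwards [eventually_lt_of_limsup_lt h, eventually_ge_atTop 1] with n hn hn1
  have hn0 : (n : ℝ) ≠ 0 := by positivity
  calc a n = (a n ^ (1 / (n : ℝ))) ^ n := by
        rw [← ENNReal.rpow_natCast, ← ENNReal.rpow_mul, one_div_mul_cancel hn0, ENNReal.rpow_one]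
    _ ≤ b ^ n := by gcongr

theorem eq_of_forall_pow_eq_pow {G : Type*} [CommGroupWithZero G] {z w : G} (hw : w ≠ 0)
    {P : ℕ → Prop} (hP : ∀ d : ℕ, (∀ n, P n → d ∣ n) → d = 1)
    (h : ∀ n, P n → z ^ n = w ^ n) : z = w := by
  have : orderOf (z / w) = 1 := hP _ fun n hn =>
    orderOf_dvd_of_pow_eq_one (by rw [div_pow, h n hn, div_self (pow_ne_zero n hw)])
  rwa [orderOf_eq_one_iff, div_eq_one_iff_eq hw] at this

theorem Complex.eq_ofReal_of_norm_le_of_le_re {z : ℂ} {x : ℝ} (hz : ‖z‖ ≤ x) (hx : x ≤ z.re) :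
    z = x := by
  have hnorm : ‖z‖ = x := le_antisymm hz (hx.trans (re_le_norm z))
  have hre : z.re = x := le_antisymm (hnorm ▸ re_le_norm z) hx
  have him : z.im = 0 :=
    abs_re_eq_norm.mp (by rw [hre, hnorm, abs_of_nonneg (hnorm ▸ norm_nonneg z)])
  exact Complex.ext (by simp [hre]) (by simp [him])

theorem exists_lt_ball_subset_of_closedBall_subset {E : Type*} [NormedAddCommGroup E]
    [NormedSpace ℝ E] [ProperSpace E] {U : Set E} (hU : IsOpen U) {x : E} {c : ℝ} (hc : 0 ≤ c)
    (h : closedBall x c ⊆ U) : ∃ r, c < r ∧ ball x r ⊆ U := by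
  obtain ⟨δ, hδ, hsub⟩ := (isCompact_closedBall x c).exists_thickening_subset_open hU h
  exact ⟨δ + c, by linarith, thickening_closedBall hδ hc x ▸ hsub⟩

noncomputable def genFun (a : ℕ → ℝ) (z : ℂ) : ℂ := ∑' n, (a n : ℂ) * z ^ n

section
variable {a : ℕ → ℝ} {c : ℝ}

theorem norm_mul_pow_le (ha : ∀ n, 0 ≤ a n) {R : ℝ} {z : ℂ} (hz : ‖z‖ ≤ R) (n : ℕ) :
    ‖(a n : ℂ) * z ^ n‖ ≤ a n * R ^ n := by
  rw [norm_mul, norm_pow, Complex.norm_real, Real.norm_of_nonneg (ha n)]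
  exact mul_le_mul_of_nonneg_left (pow_le_pow_left₀ (norm_nonneg z) hz n) (ha n)

theorem summable_mul_pow_of_le (ha : ∀ n, 0 ≤ a n) {R x : ℝ}
    (hR : Summable fun n => a n * R ^ n) (hx0 : 0 ≤ x) (hxR : x ≤ R) :
    Summable fun n => a n * x ^ n :=
  hR.of_nonneg_of_le (fun n => mul_nonneg (ha n) (pow_nonneg hx0 n))
    fun n => mul_le_mul_of_nonneg_left (pow_le_pow_left₀ hx0 hxR n) (ha n)

theorem summable_mul_pow_of_norm_le (ha : ∀ n, 0 ≤ a n) {R : ℝ}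
    (hR : Summable fun n => a n * R ^ n) {z : ℂ} (hz : ‖z‖ ≤ R) :
    Summable fun n => (a n : ℂ) * z ^ n :=
  hR.of_norm_bounded (norm_mul_pow_le ha hz)

theorem differentiableOn_genFun (ha : ∀ n, 0 ≤ a n) {R : ℝ} (hR : Summable fun n => a n * R ^ n) :
    DifferentiableOn ℂ (genFun a) (ball 0 R) :=
  Complex.differentiableOn_tsum_of_summable_norm hR (fun n => by fun_prop) isOpen_ball
    fun n _ hw => norm_mul_pow_le ha (mem_ball_zero_iff.mp hw).le n

theorem exists_gt_summable_mul_pow (ha : ∀ n, 0 ≤ a n) (hc : 0 < c)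
    (h : limsup (fun n : ℕ => ENNReal.ofReal (a n) ^ (1 / (n : ℝ))) atTop < ENNReal.ofReal c⁻¹) :
    ∃ R, c < R ∧ Summable fun n => a n * R ^ n := by
  obtain ⟨b, hlim, hb⟩ := exists_between h
  have hb0 : b ≠ 0 := (pos_of_gt hlim).ne'
  have hbtop : b ≠ ⊤ := hb.ne_top
  set ρ := b.toReal
  have hρ : 0 < ρ := ENNReal.toReal_pos hb0 hbtop
  have hρc : c < ρ⁻¹ := lt_inv_comm₀ hρ hc |>.mp ((ENNReal.lt_ofReal_iff_toReal_lt hbtop).mp hb)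
  obtain ⟨R, hcR, hRρ⟩ := exists_between hρc
  have hR : 0 ≤ R := hc.le.trans hcR.le
  have hρR : ρ * R < 1 := (lt_inv_mul_iff₀ hρ).mp (by rwa [mul_one])
  refine ⟨R, hcR,
    (summable_geometric_of_lt_one (by positivity) hρR).of_norm_bounded_eventually_nat ?_⟩
  filter_upwards [ENNReal.eventually_le_pow_of_limsup_rpow_lt hlim] with n hn
  have han : a n ≤ ρ ^ n := by
    rw [← ENNReal.ofReal_toReal hbtop, ← ENNReal.ofReal_pow ENNReal.toReal_nonneg] at hn
    exact (ENNReal.ofReal_le_ofReal_iff (by positivity)).mp hn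
  rw [Real.norm_of_nonneg (mul_nonneg (ha n) (pow_nonneg hR n)), mul_pow]
  exact mul_le_mul_of_nonneg_right han (pow_nonneg hR n)

theorem exists_coeff_ne_zero (ha0 : a 0 = 0) (hc : HasSum (fun n => a n * c ^ n) 1) :
    ∃ n, n ≠ 0 ∧ a n ≠ 0 := by
  by_contra! h
  have : ∀ n, a n * c ^ n = 0 := fun n => by
    rcases eq_or_ne n 0 with rfl | hn
    · simp [ha0]
    · simp [h n hn]
  exact one_ne_zero (hc.unique (by simp [this]))

theorem genFun_ofReal_eq {x s : ℝ} (h : HasSum (fun n => a n * x ^ n) s) :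
    genFun a x = s := by
  have : HasSum (fun n => (a n : ℂ) * (x : ℂ) ^ n) s := by
    exact_mod_cast Complex.hasSum_ofReal.mpr h
  exact this.tsum_eq

theorem norm_genFun_lt_one (ha : ∀ n, 0 ≤ a n) (ha0 : a 0 = 0)
    (hc : HasSum (fun n => a n * c ^ n) 1) {z : ℂ} (hz : ‖z‖ < c) : ‖genFun a z‖ < 1 := by
  obtain ⟨n₀, hn₀, han₀⟩ := exists_coeff_ne_zero ha0 hc
  have hzc : HasSum (fun n => a n * ‖z‖ ^ n) (∑' n, a n * ‖z‖ ^ n) :=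
    (summable_mul_pow_of_le ha hc.summable (norm_nonneg z) hz.le).hasSum
  calc ‖genFun a z‖ ≤ ∑' n, a n * ‖z‖ ^ n := tsum_of_norm_bounded hzc (norm_mul_pow_le ha le_rfl)
    _ < 1 := hasSum_lt (fun n => mul_le_mul_of_nonneg_left
          (pow_le_pow_left₀ (norm_nonneg z) hz.le n) (ha n))
        (mul_lt_mul_of_pos_left (pow_lt_pow_left₀ hz (norm_nonneg z) hn₀)
          ((ha n₀).lt_of_ne' han₀)) hzc hc

theorem differentiableOn_inv_one_sub_genFun (ha : ∀ n, 0 ≤ a n) (ha0 : a 0 = 0)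
    (hc : HasSum (fun n => a n * c ^ n) 1) :
    DifferentiableOn ℂ (fun z => (1 - genFun a z)⁻¹) (ball 0 c) :=
  ((differentiableOn_const 1).sub (differentiableOn_genFun ha hc.summable)).inv fun z hz h0 =>
    (norm_genFun_lt_one ha ha0 hc (mem_ball_zero_iff.mp hz)).ne
      (by rw [← sub_eq_zero.mp h0, norm_one])

theorem eq_of_norm_eq_of_genFun_eq_one (ha : ∀ n, 0 ≤ a n)
    (hc : HasSum (fun n => a n * c ^ n) 1) (hmix : ∀ d : ℕ, (∀ n, a n ≠ 0 → d ∣ n) → d = 1)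
    {z : ℂ} (hz : ‖z‖ = c) (h1 : genFun a z = 1) : z = c := by
  obtain rfl | hc0 := eq_or_ne c 0
  · simpa using hz
  have hre : HasSum (fun n => a n * (z ^ n).re) 1 := by
    have := (summable_mul_pow_of_norm_le ha hc.summable hz.le).hasSum_iff.mpr h1
    simpa using Complex.hasSum_re this
  have hgap : ∀ n, 0 ≤ a n * (c ^ n - (z ^ n).re) := fun n =>
    mul_nonneg (ha n) (sub_nonneg.mpr (hz ▸ norm_pow z n ▸ Complex.re_le_norm _))
  have hzero := (hasSum_zero_iff_of_nonneg hgap).mp (by simpa [mul_sub] using hc.sub hre)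
  refine eq_of_forall_pow_eq_pow (Complex.ofReal_ne_zero.mpr hc0) hmix fun n hn => ?_
  have : (z ^ n).re = c ^ n := by
    simpa [sub_eq_zero, hn, eq_comm] using congrFun hzero n
  rw [← Complex.ofReal_pow]
  exact Complex.eq_ofReal_of_norm_le_of_le_re (by rw [norm_pow, hz]) this.ge

theorem deriv_genFun_ne_zero (ha : ∀ n, 0 ≤ a n) (ha0 : a 0 = 0) (hc0 : 0 < c)
    (hc : HasSum (fun n => a n * c ^ n) 1) {R : ℝ} (hR : Summable fun n => a n * R ^ n)
    (hcR : c < R) : deriv (genFun a) c ≠ 0 := by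
  have hderiv : HasSum (fun n => deriv (fun w : ℂ => (a n : ℂ) * w ^ n) c) (deriv (genFun a) c) :=
    Complex.hasSum_deriv_of_summable_norm hR (fun n => by fun_prop) isOpen_ball
      (fun n _ hw => norm_mul_pow_le ha (mem_ball_zero_iff.mp hw).le n) (by simpa [abs_of_pos hc0])
  have hre : HasSum (fun n => a n * (n * c ^ (n - 1))) (deriv (genFun a) c).re := by
    simpa [← Complex.ofReal_pow] using Complex.hasSum_re hderiv
  obtain ⟨n₀, hn₀, han₀⟩ := exists_coeff_ne_zero ha0 hc
  have hpos : 0 < a n₀ * (n₀ * c ^ (n₀ - 1)) :=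
    mul_pos ((ha n₀).lt_of_ne' han₀) (by positivity)
  intro h0
  have := le_hasSum hre n₀ fun n _ => mul_nonneg (ha n) (by positivity)
  rw [h0, Complex.zero_re] at this
  linarith

theorem dslope_one_sub_genFun_ne_zero (ha : ∀ n, 0 ≤ a n) (ha0 : a 0 = 0) (hc0 : 0 < c)
    (hc : HasSum (fun n => a n * c ^ n) 1) (hmix : ∀ d : ℕ, (∀ n, a n ≠ 0 → d ∣ n) → d = 1)
    {R : ℝ} (hR : Summable fun n => a n * R ^ n) (hcR : c < R) {z : ℂ} (hz : ‖z‖ ≤ c) :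
    dslope (fun w => 1 - genFun a w) c z ≠ 0 := by
  rcases eq_or_ne z c with rfl | hzc
  · rw [dslope_same, deriv_const_sub]
    exact neg_ne_zero.mpr (deriv_genFun_ne_zero ha ha0 hc0 hc hR hcR)
  intro h0
  have h1 : genFun a z = 1 := by
    have := sub_smul_dslope (fun w => 1 - genFun a w) c z
    simp only [h0, smul_zero, genFun_ofReal_eq hc, Complex.ofReal_one, sub_self] at this
    linear_combination this
  rcases hz.lt_or_eq with hlt | heq
  · simpa [h1] using norm_genFun_lt_one ha ha0 hc hlt
  · exact hzc (eq_of_norm_eq_of_genFun_eq_one ha hc hmix heq h1)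

theorem exists_one_sub_genFun_eq_mul (ha : ∀ n, 0 ≤ a n) (ha0 : a 0 = 0) (hc0 : 0 < c)
    (hc : HasSum (fun n => a n * c ^ n) 1) (hmix : ∀ d : ℕ, (∀ n, a n ≠ 0 → d ∣ n) → d = 1)
    {R : ℝ} (hR : Summable fun n => a n * R ^ n) (hcR : c < R) :
    ∃ r, c < r ∧ ∃ φ : ℂ → ℂ, DifferentiableOn ℂ φ (ball 0 r) ∧ (∀ z ∈ ball 0 r, φ z ≠ 0) ∧
      ∀ z, 1 - genFun a z = (z - c) * φ z := by
  set φ := dslope (fun w => 1 - genFun a w) c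
  have hc_mem : (c : ℂ) ∈ ball 0 R := by simpa [abs_of_pos hc0]
  have hφ : DifferentiableOn ℂ φ (ball 0 R) :=
    (Complex.differentiableOn_dslope (isOpen_ball.mem_nhds hc_mem)).mpr
      ((differentiableOn_const 1).sub (differentiableOn_genFun ha hR))
  have hU : IsOpen (ball 0 R ∩ φ ⁻¹' {0}ᶜ) :=
    hφ.continuousOn.isOpen_inter_preimage isOpen_ball isOpen_compl_singleton
  obtain ⟨r, hcr, hr⟩ := exists_lt_ball_subset_of_closedBall_subset hU hc0.le fun z hz =>
    ⟨mem_ball_zero_iff.mpr ((mem_closedBall_zero_iff.mp hz).trans_lt hcR),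
      dslope_one_sub_genFun_ne_zero ha ha0 hc0 hc hmix hR hcR (mem_closedBall_zero_iff.mp hz)⟩
  refine ⟨r, hcr, φ, hφ.mono (hr.trans Set.inter_subset_left), fun z hz => (hr hz).2, fun z => ?_⟩
  simpa [genFun_ofReal_eq hc] using (sub_smul_dslope (fun w => 1 - genFun a w) c z).symm

end

/-- Proposition `gsprop`: Let `f(z) = Σ f_n z^n ∈ z·ℤ≥0[[z]]`
define a loop shift `σ_f` of finite entropy `log λ > 0` (so `λ > 1` and
`f(1/λ) = 1`), strongly positive recurrent (`limsup f_n^{1/n} < λ`) and mixing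
(`gcd{n : f_n ≠ 0} = 1`).  Then the zeta function `ζ(z) = 1/(1 − f(z))` is
holomorphic in `|z| < 1/λ`, and `(1 − λz)·ζ(z)` extends to a holomorphic
nonvanishing function on a disk `|z| < r` with `r > 1/λ`
(expressed by `g` holomorphic nonvanishing with `g(z)·(1 − f(z)) = 1 − λz`). -/
theorem stmt10 (f : ℕ → ℕ) (lam : ℝ)
    (hf0 : f 0 = 0)
    (hlam : 1 < lam)
    (hrec : HasSum (fun n : ℕ => (f n : ℝ) * lam⁻¹ ^ n) 1)
    (hSPR : Filter.atTop.limsup (fun n : ℕ => ((f n : ℝ≥0∞)) ^ (1 / (n : ℝ)))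
        < ENNReal.ofReal lam)
    (hmix : ∀ d : ℕ, (∀ n, f n ≠ 0 → d ∣ n) → d = 1) :
    DifferentiableOn ℂ
      (fun z : ℂ => (1 - ∑' n : ℕ, (f n : ℂ) * z ^ n)⁻¹)
      (ball (0 : ℂ) lam⁻¹) ∧
    ∃ r : ℝ, lam⁻¹ < r ∧ ∃ g : ℂ → ℂ,
      DifferentiableOn ℂ g (ball (0 : ℂ) r) ∧
      (∀ z ∈ ball (0 : ℂ) r, g z ≠ 0) ∧
      (∀ z ∈ ball (0 : ℂ) r,
        g z * (1 - ∑' n : ℕ, (f n : ℂ) * z ^ n) = 1 - (lam : ℂ) * z) := by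
  set a : ℕ → ℝ := fun n => f n
  have ha : ∀ n, 0 ≤ a n := fun n => Nat.cast_nonneg _
  have ha0 : a 0 = 0 := by simp [a, hf0]
  have hmix' : ∀ d : ℕ, (∀ n, a n ≠ 0 → d ∣ n) → d = 1 :=
    fun d hd => hmix d fun n hn => hd n (Nat.cast_ne_zero.mpr hn)
  have hlam0 : lam ≠ 0 := by positivity
  have hc0 : 0 < lam⁻¹ := by positivity
  have hgen : ∀ z, ∑' n : ℕ, (f n : ℂ) * z ^ n = genFun a z := fun z => by simp [genFun, a]
  obtain ⟨R, hcR, hR⟩ := exists_gt_summable_mul_pow ha hc0 (by simpa [a] using hSPR)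
  obtain ⟨r, hcr, φ, hφ, hφ0, hfac⟩ := exists_one_sub_genFun_eq_mul ha ha0 hc0 hrec hmix' hR hcR
  simp only [hgen]
  refine ⟨differentiableOn_inv_one_sub_genFun ha ha0 hrec, r, hcr, fun z => -lam / φ z,
    (differentiableOn_const _).div hφ hφ0, fun z hz => div_ne_zero (by simpa) (hφ0 z hz),
    fun z hz => ?_⟩
  have hlam' : (lam : ℂ) ≠ 0 := Complex.ofReal_ne_zero.mpr hlam0
  rw [hfac, Complex.ofReal_inv]
  field_simp [hφ0 z hz]
  ring
end

section
/- Let (S, μ) be an ergodic measure-preserving automorphism of a probability space and V a measurable set with μ(V) > 0, with return time r_V(x) = min{n > 0 : Sⁿx ∈ V}. Then the following are equivalent: (1) limsup_n (μ{x ∈ V : r_V(x) ≥ n})^{1/n} < 1; (2) limsup_n (μ{x : x ∉ ∪_{k=1}^n S^{−k}V})^{1/n} < 1. -/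
/-!
Write `B n` for the points avoiding `V` at times `1, …, n` and `R n` for the points of `V` with
return time `≥ n`. Splitting `B n` along `V` gives `B n ∩ V = R (n + 1)` and
`S⁻¹ (B n \ V) = B (n + 1)`, so invariance of `μ` yields
`μ (B n) = μ (R (n + 1)) + μ (B (n + 1))`.
Ergodicity forces `μ (B n) → 0`, hence `μ (B n) = ∑_{m > n} μ (R m)`: a geometric bound on
`μ (R m)` sums to one on `μ (B n)`, and conversely `μ (R (n + 1)) ≤ μ (B n)`.
-/

open Filter ENNReal MeasureTheory Topology

def DecaysExponentially (u : ℕ → ℝ≥0∞) : Prop :=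
  ∃ C r : ℝ≥0∞, C ≠ ∞ ∧ 0 < r ∧ r < 1 ∧ ∀ᶠ n in atTop, u n ≤ C * r ^ n

namespace DecaysExponentially

variable {u v : ℕ → ℝ≥0∞}

lemma mono (h : DecaysExponentially v) (huv : ∀ n, u n ≤ v n) : DecaysExponentially u := by
  obtain ⟨C, r, hC, hr0, hr1, hv⟩ := h
  exact ⟨C, r, hC, hr0, hr1, hv.mono fun n hn => (huv n).trans hn⟩

lemma tsum_tail (h : DecaysExponentially u) : DecaysExponentially (fun n => ∑' k, u (n + k)) := by
  obtain ⟨C, r, hC, hr0, hr1, hu⟩ := h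
  obtain ⟨N, hN⟩ := eventually_atTop.1 hu
  refine ⟨C * (1 - r)⁻¹, r, mul_ne_top hC (inv_ne_top.2 (tsub_pos_of_lt hr1).ne'), hr0, hr1,
    eventually_atTop.2 ⟨N, fun n hn => ?_⟩⟩
  calc ∑' k, u (n + k) ≤ ∑' k, C * r ^ n * r ^ k :=
        ENNReal.tsum_le_tsum fun k => by
          rw [mul_assoc, ← pow_add]; exact hN _ (hn.trans (Nat.le_add_right n k))
    _ = C * (1 - r)⁻¹ * r ^ n := by
        rw [ENNReal.tsum_mul_left, ENNReal.tsum_geometric, mul_right_comm]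

end DecaysExponentially

lemma decaysExponentially_comp_succ_iff {u : ℕ → ℝ≥0∞} :
    DecaysExponentially (fun n => u (n + 1)) ↔ DecaysExponentially u := by
  constructor
  · rintro ⟨C, r, hC, hr0, hr1, hu⟩
    refine ⟨C * r⁻¹, r, mul_ne_top hC (inv_ne_top.2 hr0.ne'), hr0, hr1, ?_⟩
    filter_upwards [(tendsto_sub_atTop_nat 1).eventually hu, eventually_ge_atTop 1] with n hn hn1
    obtain ⟨m, rfl⟩ := Nat.exists_eq_add_of_le' hn1
    rwa [pow_succ, mul_assoc, mul_comm (r ^ m), ← mul_assoc r⁻¹,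
      ENNReal.inv_mul_cancel hr0.ne' hr1.ne_top, one_mul]
  · rintro ⟨C, r, hC, hr0, hr1, hu⟩
    refine ⟨C * r, r, mul_ne_top hC hr1.ne_top, hr0, hr1, ?_⟩
    filter_upwards [(tendsto_add_atTop_nat 1).eventually hu] with n hn
    rwa [mul_assoc, ← pow_succ']

lemma ENNReal.rpow_one_div_natCast_le_iff {x y : ℝ≥0∞} {n : ℕ} (hn : n ≠ 0) :
    x ^ (1 / (n : ℝ)) ≤ y ↔ x ≤ y ^ n := by
  rw [one_div, ENNReal.rpow_inv_le_iff (by positivity), ENNReal.rpow_natCast]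

lemma ENNReal.eventually_mul_pow_le_pow {C r t : ℝ≥0∞} (hC : C ≠ ∞) (hrt : r < t)
    (ht : t ≠ ∞) :
    ∀ᶠ n in atTop, C * r ^ n ≤ t ^ n := by
  have ht0 : t ≠ 0 := (hrt.trans_le' bot_le).ne'
  have hratio : r / t < 1 := by rwa [ENNReal.div_lt_iff (Or.inl ht0) (Or.inl ht), one_mul]
  have hlim : Tendsto (fun n => C * (r / t) ^ n) atTop (𝓝 0) := by
    simpa using ENNReal.Tendsto.const_mul
      (ENNReal.tendsto_pow_atTop_nhds_zero_of_lt_one hratio) (Or.inr hC)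
  filter_upwards [hlim.eventually_le_const zero_lt_one] with n hn
  calc C * r ^ n = C * (r / t) ^ n * t ^ n := by
        rw [mul_assoc, ← mul_pow, ENNReal.div_mul_cancel ht0 ht]
    _ ≤ t ^ n := by simpa using mul_le_mul_left hn (t ^ n)

lemma limsup_rpow_one_div_lt_one_iff {u : ℕ → ℝ≥0∞} :
    limsup (fun n : ℕ => u n ^ (1 / (n : ℝ))) atTop < 1 ↔ DecaysExponentially u := by
  constructor
  · intro h
    obtain ⟨r, hlt, hr1⟩ := exists_between h
    refine ⟨1, r, one_ne_top, hlt.trans_le' bot_le, hr1, ?_⟩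
    filter_upwards [eventually_lt_of_limsup_lt hlt, eventually_ne_atTop 0] with n hn hn0
    rw [one_mul, ← ENNReal.rpow_one_div_natCast_le_iff hn0]
    exact hn.le
  · rintro ⟨C, r, hC, -, hr1, hu⟩
    obtain ⟨t, hrt, ht1⟩ := exists_between hr1
    refine (limsup_le_of_le (by isBoundedDefault) ?_).trans_lt ht1
    filter_upwards [hu, ENNReal.eventually_mul_pow_le_pow hC hrt ht1.ne_top, eventually_ne_atTop 0]
      with n hn hCt hn0
    exact (ENNReal.rpow_one_div_natCast_le_iff hn0).2 (hn.trans hCt)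

lemma ENNReal.eq_tsum_of_eq_add_of_tendsto_zero {a b : ℕ → ℝ≥0∞}
    (hb : ∀ n, b n = a n + b (n + 1)) (hlim : Tendsto b atTop (𝓝 0)) (n : ℕ) :
    b n = ∑' k, a (n + k) := by
  have hpartial : ∀ N, b n = ∑ k ∈ Finset.range N, a (n + k) + b (n + N) := by
    intro N
    induction N with
    | zero => simp
    | succ N ih => rw [ih, hb (n + N), Finset.sum_range_succ, add_assoc, add_assoc]
  have hrest : Tendsto (fun N => b (n + N)) atTop (𝓝 0) := by
    simpa only [add_comm n] using (tendsto_add_atTop_iff_nat n).2 hlim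
  have := (ENNReal.tendsto_nat_tsum fun k => a (n + k)).add hrest
  rw [add_zero] at this
  exact tendsto_nhds_unique (tendsto_const_nhds.congr hpartial) this

section Visits

variable {X : Type*} (S : X → X) (V : Set X)

def noVisitUpTo (n : ℕ) : Set X := {x | ∀ k, 1 ≤ k → k ≤ n → S^[k] x ∉ V}

def returnTimeGe (n : ℕ) : Set X := {x | x ∈ V ∧ ∀ k, 0 < k → k < n → S^[k] x ∉ V}

variable {S V}

lemma noVisitUpTo_inter_self (n : ℕ) : noVisitUpTo S V n ∩ V = returnTimeGe S V (n + 1) := by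
  ext x
  simp only [noVisitUpTo, returnTimeGe, Set.mem_inter_iff, Set.mem_ofPred_eq, Nat.lt_succ_iff]
  exact and_comm

lemma noVisitUpTo_succ (n : ℕ) : noVisitUpTo S V (n + 1) = S ⁻¹' (noVisitUpTo S V n \ V) := by
  ext x
  simp only [noVisitUpTo, Set.mem_preimage, Set.mem_sdiff, Set.mem_ofPred_eq]
  constructor
  · intro h
    refine ⟨fun k hk1 hkn => ?_, by simpa using h 1 le_rfl (by omega)⟩
    rw [← Function.iterate_succ_apply]
    exact h (k + 1) (by omega) (by omega)
  · rintro ⟨h, h1⟩ k hk1 hkn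
    obtain ⟨j, rfl⟩ := Nat.exists_eq_add_of_le' hk1
    rcases j.eq_zero_or_pos with rfl | hj
    · simpa using h1
    · rw [Function.iterate_succ_apply]
      exact h j hj (by omega)

variable [MeasurableSpace X]

lemma measurableSet_noVisitUpTo (hS : Measurable S) (hV : MeasurableSet V) (n : ℕ) :
    MeasurableSet (noVisitUpTo S V n) := by
  simp only [noVisitUpTo, Set.ofPred_forall]
  exact .iInter fun k => .iInter fun _ => .iInter fun _ => (hS.iterate k) hV.compl

lemma measurableSet_setOf_forall_iterate_notMem (hS : Measurable S) (hV : MeasurableSet V) :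
    MeasurableSet {x | ∀ k, S^[k] x ∉ V} := by
  simp only [Set.ofPred_forall]
  exact .iInter fun k => (hS.iterate k) hV.compl

lemma measure_noVisitUpTo_eq_add {μ : Measure X} (hS : MeasurePreserving S μ μ)
    (hV : MeasurableSet V) (n : ℕ) :
    μ (noVisitUpTo S V n) = μ (returnTimeGe S V (n + 1)) + μ (noVisitUpTo S V (n + 1)) := by
  rw [← noVisitUpTo_inter_self, noVisitUpTo_succ,
    hS.measure_preimage ((measurableSet_noVisitUpTo hS.measurable hV n).diff hV).nullMeasurableSet,
    measure_inter_add_sdiff _ hV]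

lemma Ergodic.measure_setOf_forall_iterate_notMem_eq_zero {μ : Measure X} [IsFiniteMeasure μ]
    (herg : Ergodic S μ) (hV : MeasurableSet V) (hVpos : μ V ≠ 0) :
    μ {x | ∀ k, S^[k] x ∉ V} = 0 := by
  set A := {x | ∀ k, S^[k] x ∉ V}
  have hA : MeasurableSet A := measurableSet_setOf_forall_iterate_notMem herg.measurable hV
  have hAinv : A ⊆ S ⁻¹' A := fun x hx k => by
    simpa only [← Function.iterate_succ_apply] using hx (k + 1)
  -- `A` is forward invariant and disjoint from `V`, so ergodicity leaves only `μ A = 0`.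
  refine (herg.ae_empty_or_univ_of_ae_le_preimage hA.nullMeasurableSet hAinv.eventuallyLE).elim
    (fun h => by simpa using measure_congr h) fun h => absurd ?_ hVpos
  exact measure_mono_null (fun x hx (hxA : x ∈ A) => hxA 0 hx) (ae_eq_univ.1 h)

lemma tendsto_measure_noVisitUpTo {μ : Measure X} [IsFiniteMeasure μ] (herg : Ergodic S μ)
    (hV : MeasurableSet V) (hVpos : μ V ≠ 0) :
    Tendsto (fun n => μ (noVisitUpTo S V n)) atTop (𝓝 0) := by
  have hanti : Antitone (noVisitUpTo S V) := fun m n hmn x hx k hk1 hkn => hx k hk1 (hkn.trans hmn)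
  have hinter : ⋂ n, noVisitUpTo S V n = S ⁻¹' {x | ∀ k, S^[k] x ∉ V} := by
    ext x
    simp only [noVisitUpTo, Set.mem_iInter, Set.mem_preimage, Set.mem_ofPred_eq,
      ← Function.iterate_succ_apply]
    exact ⟨fun h k => h (k + 1) (k + 1) (by omega) le_rfl, fun h n k hk1 _ => by
      obtain ⟨j, rfl⟩ := Nat.exists_eq_add_of_le' hk1; exact h j⟩
  have := tendsto_measure_iInter_atTop
    (fun n => (measurableSet_noVisitUpTo herg.measurable hV n).nullMeasurableSet) hanti
    ⟨0, measure_ne_top μ _⟩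
  rwa [hinter, herg.measure_preimage
    (measurableSet_setOf_forall_iterate_notMem herg.measurable hV).nullMeasurableSet,
    herg.measure_setOf_forall_iterate_notMem_eq_zero hV hVpos] at this

end Visits

theorem stmt14_general {X : Type*} [MeasurableSpace X] (μ : Measure X)
    [IsProbabilityMeasure μ] (S : X → X)
    (herg : Ergodic S μ)
    (V : Set X) (hV : MeasurableSet V) (hVpos : 0 < μ V) :
    (Filter.atTop.limsup (fun n : ℕ =>
        (μ {x | x ∈ V ∧ ∀ k, 0 < k → k < n → S^[k] x ∉ V}) ^ (1 / (n : ℝ))) < 1)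
    ↔ (Filter.atTop.limsup (fun n : ℕ =>
        (μ {x | ∀ k, 1 ≤ k → k ≤ n → S^[k] x ∉ V}) ^ (1 / (n : ℝ))) < 1) := by
  have hrec := measure_noVisitUpTo_eq_add herg.toMeasurePreserving hV
  have htail := ENNReal.eq_tsum_of_eq_add_of_tendsto_zero hrec
    (tendsto_measure_noVisitUpTo herg hV hVpos.ne')
  rw [limsup_rpow_one_div_lt_one_iff, limsup_rpow_one_div_lt_one_iff]
  change DecaysExponentially (fun n => μ (returnTimeGe S V n)) ↔
    DecaysExponentially (fun n => μ (noVisitUpTo S V n))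
  rw [← decaysExponentially_comp_succ_iff]
  refine ⟨fun h => ?_, fun h => h.mono fun n => (hrec n).symm ▸ le_self_add⟩
  simpa only [← htail] using h.tsum_tail

/-- Remark `exprec`, (1) ⟺ (2): Let `(S, μ)` be an ergodic
measure-preserving automorphism of a probability space and `V` a measurable
set with `μ(V) > 0`, with return time `r_V(x) = min{n > 0 : Sⁿx ∈ V}`.  Then
`V` is exponentially recurrent, i.e.
`limsup_n (μ{x ∈ V : r_V(x) ≥ n})^{1/n} < 1`
(where `r_V(x) ≥ n` means `S^k x ∉ V` for `0 < k < n`), if and only if `V` is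
exponentially filling, i.e.
`limsup_n (μ{x : x ∉ ∪_{k=1}^n S^{−k}V})^{1/n} < 1`. -/
theorem stmt14 {X : Type*} [MeasurableSpace X] (μ : Measure X)
    [IsProbabilityMeasure μ] (S : X → X)
    (hbij : Function.Bijective S) (herg : Ergodic S μ)
    (V : Set X) (hV : MeasurableSet V) (hVpos : 0 < μ V) :
    (Filter.atTop.limsup (fun n : ℕ =>
        (μ {x | x ∈ V ∧ ∀ k, 0 < k → k < n → S^[k] x ∉ V}) ^ (1 / (n : ℝ))) < 1)
    ↔ (Filter.atTop.limsup (fun n : ℕ =>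
        (μ {x | ∀ k, 1 ≤ k → k ≤ n → S^[k] x ∉ V}) ^ (1 / (n : ℝ))) < 1) :=
  stmt14_general μ S herg V hV hVpos
end

section
/- Let S be a positive recurrent loop shift σ_f with entropy log λ ∈ (0, ∞) and measure of maximal entropy μ. Fix the base vertex and let V be the cylinder set of points whose 0-th edge starts at the base vertex, with f_n first-return loops of length n. Then V is exponentially filling for (S, μ) — i.e., μ(S ∖ ∪_{k=1}^N S^k V) → 0 exponentially fast in N — if and only if σ_f is strongly positive recurrent (limsup f_n^{1/n} < λ). -/
/-!
Looking back from time `-1`, a point avoids `S V, …, S^N V` exactly when its edge at time `-1`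
sits at position `≥ N` of its first-return loop. By shift invariance, the event that this edge is
a given edge of a loop of length `n` has mass `c λ⁻ⁿ`, so the complement has measure
`c Σ_{n>N} (n - N) f_n λ⁻ⁿ`.
If `f_n ≤ θⁿ` eventually with `θ < λ`, this tail is at most a constant times `(θ/λ)^N`;
conversely the single term `n = N + 1` bounds `f_{N+1} λ^{-(N+1)}` by the tail. Both limsups are
root tests, so each direction amounts to an "eventually `≤ C ρⁿ`" bound.
-/

open Filter ENNReal MeasureTheory

/-- The edge alphabet of the loop graph of `f`: a triple `(n, c, i)` with
`c < f n` selecting one of the `f n` first-return loops of length `n ≥ 1`, and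
`i < n` the position along the loop (position `0` starts at the base vertex). -/
def LoopAlphabet (f : ℕ → ℕ) : Type :=
  {p : ℕ × ℕ × ℕ // p.2.1 < f p.1 ∧ p.2.2 < p.1}

/-- Adjacency in the loop graph. -/
def LoopAdj (f : ℕ → ℕ) (a b : LoopAlphabet f) : Prop :=
  (b.1.1 = a.1.1 ∧ b.1.2.1 = a.1.2.1 ∧ b.1.2.2 = a.1.2.2 + 1) ∨
  (a.1.2.2 + 1 = a.1.1 ∧ b.1.2.2 = 0)

/-- The loop shift space `σ_f`: bi-infinite walks through the loop graph. -/
def LoopShiftSpace (f : ℕ → ℕ) : Type :=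
  {x : ℤ → LoopAlphabet f // ∀ t : ℤ, LoopAdj f (x t) (x (t + 1))}

instance (f : ℕ → ℕ) : MeasurableSpace (LoopShiftSpace f) := ⊤

/-- The shift map on the loop shift space. -/
def loopShift (f : ℕ → ℕ) : LoopShiftSpace f → LoopShiftSpace f :=
  fun x => ⟨fun t => x.1 (t + 1), fun t => x.2 (t + 1)⟩

namespace ENNReal

theorem rpow_one_div_le_iff {x y : ℝ≥0∞} {n : ℕ} (hn : n ≠ 0) :
    x ^ (1 / (n : ℝ)) ≤ y ↔ x ≤ y ^ n := by
  rw [one_div, rpow_inv_le_iff (by positivity), rpow_natCast]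

theorem exists_pow_bound_of_limsup_rpow_lt {u : ℕ → ℝ≥0∞} {R : ℝ≥0∞}
    (h : atTop.limsup (fun n : ℕ => u n ^ (1 / (n : ℝ))) < R) :
    ∃ ρ, 0 < ρ ∧ ρ < R ∧ ∀ᶠ n in atTop, u n ≤ ρ ^ n := by
  obtain ⟨ρ, hlim, hρR⟩ := exists_between h
  refine ⟨ρ, hlim.trans_le' bot_le, hρR, ?_⟩
  filter_upwards [eventually_lt_of_limsup_lt hlim, eventually_ne_atTop 0] with n hn hn0
  exact (rpow_one_div_le_iff hn0).1 hn.le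

theorem limsup_rpow_lt_of_le_pow {u : ℕ → ℝ≥0∞} {ρ R : ℝ≥0∞} (hρ : ρ < R)
    (h : ∀ᶠ n in atTop, u n ≤ ρ ^ n) :
    atTop.limsup (fun n : ℕ => u n ^ (1 / (n : ℝ))) < R := by
  refine lt_of_le_of_lt (limsup_le_of_le (by isBoundedDefault) ?_) hρ
  filter_upwards [h, eventually_ne_atTop 0] with n hn hn0
  exact (rpow_one_div_le_iff hn0).2 hn

theorem limsup_rpow_lt_of_le_mul_pow {u : ℕ → ℝ≥0∞} {C ρ R : ℝ≥0∞} (hC : C ≠ ∞) (hρ : ρ < R)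
    (h : ∀ᶠ n in atTop, u n ≤ C * ρ ^ n) :
    atTop.limsup (fun n : ℕ => u n ^ (1 / (n : ℝ))) < R := by
  obtain ⟨ρ', hρρ', hρ'R⟩ := exists_between hρ
  have hρ'0 : ρ' ≠ 0 := (hρρ'.trans_le' bot_le).ne'
  have hρ'top : ρ' ≠ ∞ := hρ'R.ne_top
  have hsmall : Tendsto (fun n : ℕ => C * (ρ / ρ') ^ n) atTop (nhds 0) := by
    simpa using ENNReal.Tendsto.const_mul
      (tendsto_pow_atTop_nhds_zero_of_lt_one (div_lt_of_lt_mul (by rwa [one_mul]))) (Or.inr hC)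
  refine limsup_rpow_lt_of_le_pow hρ'R ?_
  filter_upwards [h, hsmall.eventually_le_const zero_lt_one] with n hn hn1
  calc u n ≤ C * ρ ^ n := hn
    _ = C * (ρ / ρ') ^ n * ρ' ^ n := by
      rw [mul_assoc, ← mul_pow, ENNReal.div_mul_cancel hρ'0 hρ'top]
    _ ≤ ρ' ^ n := mul_le_of_le_one_left' hn1

theorem tsum_natCast_mul_pow_ne_top {q : ℝ≥0∞} (hq : q < 1) :
    ∑' m : ℕ, (m : ℝ≥0∞) * q ^ m ≠ ∞ := by
  lift q to NNReal using hq.ne_top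
  have hq' : ‖(q : ℝ)‖ < 1 := by simpa using hq
  have hsum : Summable fun m : ℕ => (m : NNReal) * q ^ m := by
    rw [← NNReal.summable_coe]
    simpa using summable_pow_mul_geometric_of_norm_lt_one 1 hq'
  simpa using ENNReal.tsum_coe_ne_top_iff_summable.2 hsum

end ENNReal

-- `tailMoment a N = Σ_{n>N} (n - N) a n`: the truncated subtraction kills the terms `n ≤ N`.
noncomputable def tailMoment (a : ℕ → ℝ≥0∞) (N : ℕ) : ℝ≥0∞ :=
  ∑' n, ((n - N : ℕ) : ℝ≥0∞) * a n

theorem apply_add_one_le_tailMoment (a : ℕ → ℝ≥0∞) (N : ℕ) : a (N + 1) ≤ tailMoment a N := by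
  calc a (N + 1) = ((N + 1 - N : ℕ) : ℝ≥0∞) * a (N + 1) := by simp
    _ ≤ tailMoment a N := ENNReal.le_tsum (N + 1)

theorem tailMoment_pow (q : ℝ≥0∞) (N : ℕ) :
    tailMoment (q ^ ·) N = q ^ N * ∑' m : ℕ, (m : ℝ≥0∞) * q ^ m := by
  rw [tailMoment, ← ENNReal.tsum_mul_left,
    ← (add_left_injective N).tsum_eq (f := fun n => ((n - N : ℕ) : ℝ≥0∞) * q ^ n)]
  · congr 1 with m
    rw [Nat.add_sub_cancel, pow_add]
    ring
  · intro n hn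
    have : N < n := by
      by_contra! h
      simp only [Function.mem_support, Nat.sub_eq_zero_of_le h, Nat.cast_zero, zero_mul,
        ne_eq, not_true_eq_false] at hn
    exact ⟨n - N, Nat.sub_add_cancel this.le⟩

theorem limsup_tailMoment_rpow_lt_one_of_limsup_rpow_lt {a : ℕ → ℝ≥0∞} {C L : ℝ≥0∞} (hC : C ≠ ∞)
    (ha : atTop.limsup (fun n : ℕ => a n ^ (1 / (n : ℝ))) < L) :
    atTop.limsup (fun N : ℕ =>
      tailMoment (fun n => a n * (C * L⁻¹ ^ n)) N ^ (1 / (N : ℝ))) < 1 := by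
  obtain ⟨θ, -, hθL, hθ⟩ := exists_pow_bound_of_limsup_rpow_lt ha
  obtain ⟨n₀, hn₀⟩ := eventually_atTop.1 hθ
  have hq : θ * L⁻¹ < 1 := by
    rw [← div_eq_mul_inv]
    exact div_lt_of_lt_mul (by rwa [one_mul])
  refine limsup_rpow_lt_of_le_mul_pow (mul_ne_top hC (tsum_natCast_mul_pow_ne_top hq)) hq ?_
  filter_upwards [eventually_ge_atTop n₀] with N hN
  calc tailMoment (fun n => a n * (C * L⁻¹ ^ n)) N ≤ C * tailMoment ((θ * L⁻¹) ^ ·) N := by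
        rw [tailMoment, tailMoment, ← ENNReal.tsum_mul_left]
        refine ENNReal.tsum_le_tsum fun n => ?_
        rcases le_or_gt n N with hnN | hNn
        · simp [Nat.sub_eq_zero_of_le hnN]
        · calc ((n - N : ℕ) : ℝ≥0∞) * (a n * (C * L⁻¹ ^ n))
              ≤ ((n - N : ℕ) : ℝ≥0∞) * (θ ^ n * (C * L⁻¹ ^ n)) := by
                gcongr; exact hn₀ n (by omega)
            _ = C * (((n - N : ℕ) : ℝ≥0∞) * (θ * L⁻¹) ^ n) := by rw [mul_pow]; ring
    _ = C * (∑' m : ℕ, (m : ℝ≥0∞) * (θ * L⁻¹) ^ m) * (θ * L⁻¹) ^ N := by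
        rw [tailMoment_pow]; ring

theorem limsup_rpow_lt_of_limsup_tailMoment_rpow_lt_one {a : ℕ → ℝ≥0∞} {C L : ℝ≥0∞}
    (hC₀ : C ≠ 0) (hC : C ≠ ∞) (hL₀ : L ≠ 0) (hL : L ≠ ∞)
    (h : atTop.limsup (fun N : ℕ =>
      tailMoment (fun n => a n * (C * L⁻¹ ^ n)) N ^ (1 / (N : ℝ))) < 1) :
    atTop.limsup (fun n : ℕ => a n ^ (1 / (n : ℝ))) < L := by
  obtain ⟨ρ, hρ₀, hρ₁, hρ⟩ := exists_pow_bound_of_limsup_rpow_lt h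
  have hρL : ρ * L < L := by simpa using (ENNReal.mul_lt_mul_iff_left hL₀ hL).2 hρ₁
  refine limsup_rpow_lt_of_le_mul_pow (C := (C * ρ)⁻¹) (by simp [hC₀, hρ₀.ne']) hρL ?_
  suffices h : ∀ᶠ N in atTop, a (N + 1) ≤ (C * ρ)⁻¹ * (ρ * L) ^ (N + 1) by
    rw [← map_add_atTop_eq_nat 1]; exact h
  filter_upwards [hρ] with N hN
  have hw₀ : C * L⁻¹ ^ (N + 1) ≠ 0 := by simp [hC₀, hL]
  have hw : C * L⁻¹ ^ (N + 1) ≠ ∞ := mul_ne_top hC (pow_ne_top (inv_ne_top.2 hL₀))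
  have hρρ : ρ⁻¹ * ρ = 1 := ENNReal.inv_mul_cancel hρ₀.ne' hρ₁.ne_top
  calc a (N + 1) ≤ ρ ^ N / (C * L⁻¹ ^ (N + 1)) :=
        (ENNReal.le_div_iff_mul_le (Or.inl hw₀) (Or.inl hw)).2
          ((apply_add_one_le_tailMoment _ N).trans hN)
    _ = C⁻¹ * (ρ⁻¹ * ρ) * ρ ^ N * L ^ (N + 1) := by
        rw [hρρ, div_eq_mul_inv, ENNReal.mul_inv (Or.inl hC₀) (Or.inl hC), ← ENNReal.inv_pow,
          inv_inv]
        ring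
    _ = (C * ρ)⁻¹ * (ρ * L) ^ (N + 1) := by
        rw [ENNReal.mul_inv (Or.inl hC₀) (Or.inl hC), mul_pow, pow_succ]
        ring

namespace LoopShiftSpace

variable {f : ℕ → ℕ}

theorem edge_eq_of_edge_succ_eq {x : LoopShiftSpace f} {t : ℤ} {n c' i : ℕ}
    (h : (x.1 (t + 1)).1 = (n, c', i + 1)) : (x.1 t).1 = (n, c', i) := by
  rcases x.2 t with ⟨h₁, h₂, h₃⟩ | ⟨-, h₀⟩
  · rw [h] at h₁ h₂ h₃
    ext <;> simp_all
  · simp [h] at h₀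

theorem edge_succ_eq {x : LoopShiftSpace f} {t : ℤ} {n c' i : ℕ}
    (h : (x.1 t).1 = (n, c', i)) (hi : i + 1 < n) : (x.1 (t + 1)).1 = (n, c', i + 1) := by
  rcases x.2 t with ⟨h₁, h₂, h₃⟩ | ⟨h₁, -⟩
  · rw [h] at h₁ h₂ h₃
    ext <;> simp_all
  · simp [h] at h₁; omega

theorem edge_sub_eq {x : LoopShiftSpace f} {t : ℤ} {n c' j : ℕ}
    (h : (x.1 t).1 = (n, c', j)) : (x.1 (t - j)).1 = (n, c', 0) := by
  induction j generalizing t with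
  | zero => simpa using h
  | succ j ih =>
    have := ih (edge_eq_of_edge_succ_eq (t := t - 1) (by simpa using h))
    rwa [Nat.cast_succ, ← sub_sub, sub_right_comm]

theorem edge_add_eq {x : LoopShiftSpace f} {t : ℤ} {n c' i : ℕ}
    (h : (x.1 t).1 = (n, c', 0)) (hi : i < n) : (x.1 (t + i)).1 = (n, c', i) := by
  induction i with
  | zero => simpa using h
  | succ i ih =>
    rw [Nat.cast_succ, ← add_assoc]
    exact edge_succ_eq (ih (by omega)) hi

theorem edge_eq_of_edge_eq {x : LoopShiftSpace f} {t : ℤ} {n c' j i : ℕ}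
    (h : (x.1 t).1 = (n, c', j)) (hi : i < n) : (x.1 (t - j + i)).1 = (n, c', i) :=
  edge_add_eq (edge_sub_eq h) hi


theorem loopShift_iterate_apply (k : ℕ) (x : LoopShiftSpace f) (t : ℤ) :
    ((loopShift f)^[k] x).1 t = x.1 (t + k) := by
  induction k generalizing x with
  | zero => simp
  | succ k ih =>
    rw [Function.iterate_succ_apply, ih]
    simp only [loopShift, Nat.cast_succ, add_assoc]

theorem loopShift_bijective : Function.Bijective (loopShift f) := by
  refine ⟨fun x y hxy => Subtype.ext (funext fun t => ?_), fun x => ?_⟩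
  · simpa [loopShift] using congrFun (congrArg Subtype.val hxy) (t - 1)
  · exact ⟨⟨fun t => x.1 (t - 1), fun t => by simpa using x.2 (t - 1)⟩,
      Subtype.ext (funext fun t => by simp [loopShift])⟩

theorem mem_loopShift_iterate_image_iff (k : ℕ) (x : LoopShiftSpace f) :
    x ∈ (loopShift f)^[k] '' {y : LoopShiftSpace f | (y.1 0).1.2.2 = 0} ↔
      (x.1 (-k)).1.2.2 = 0 := by
  obtain ⟨y, rfl⟩ := (loopShift_bijective.iterate k).2 x
  rw [(loopShift_bijective.iterate k).1.mem_set_image, loopShift_iterate_apply, neg_add_cancel]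
  rfl

theorem compl_iUnion_loopShift_iterate_image (N : ℕ) :
    Set.univ \ ⋃ k ∈ Finset.Icc 1 N,
        (loopShift f)^[k] '' {x : LoopShiftSpace f | (x.1 0).1.2.2 = 0} =
      {x : LoopShiftSpace f | N ≤ (x.1 (-1)).1.2.2} := by
  ext x
  simp only [Set.mem_sdiff, Set.mem_univ, true_and, Set.mem_iUnion, Finset.mem_Icc,
    mem_loopShift_iterate_image_iff, Set.mem_ofPred_eq, not_exists]
  obtain ⟨n, c', j, he⟩ : ∃ n c' j, (x.1 (-1)).1 = (n, c', j) := ⟨_, _, _, rfl⟩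
  have hj : j < n := by simpa [he] using (x.1 (-1)).2.2
  rw [he]
  have hloop {i : ℕ} {t : ℤ} (hi : i < n) (ht : t = -1 - j + i) : (x.1 t).1 = (n, c', i) :=
    ht ▸ edge_eq_of_edge_eq he hi
  dsimp only
  constructor
  · intro h
    by_contra! hjN
    exact h (j + 1) ⟨by omega, hjN⟩ (by rw [hloop (i := 0) (by omega) (by omega)])
  · intro hNj k hk hk0
    rw [hloop (i := j + 1 - k) (by omega) (by omega)] at hk0
    dsimp only at hk0
    omega

instance : DiscreteMeasurableSpace (LoopShiftSpace f) :=
  ⟨fun _ => MeasurableSpace.measurableSet_top⟩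

variable {μ : Measure (LoopShiftSpace f)} {w : ℕ → ℝ≥0∞}

theorem measurePreserving_loopShift (hinv : ∀ s, μ (loopShift f ⁻¹' s) = μ s) :
    MeasurePreserving (loopShift f) μ μ :=
  ⟨.of_discrete, Measure.ext fun s hs => by rw [Measure.map_apply .of_discrete hs, hinv]⟩

theorem measure_edge_eq (hinv : ∀ s, μ (loopShift f ⁻¹' s) = μ s)
    (hcyl : ∀ n c' : ℕ, 1 ≤ n → c' < f n →
      μ {x : LoopShiftSpace f | ∀ i : ℕ, i < n → (x.1 (i : ℤ)).1 = (n, c', i)} = w n)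
    {n c' j : ℕ} (hc' : c' < f n) (hj : j < n) :
    μ {x : LoopShiftSpace f | (x.1 (-1)).1 = (n, c', j)} = w n := by
  rw [← ((measurePreserving_loopShift hinv).iterate (j + 1)).measure_preimage
    (MeasurableSet.of_discrete).nullMeasurableSet, ← hcyl n c' (by omega) hc']
  congr 1 with x
  simp only [Set.mem_preimage, Set.mem_ofPred_eq, loopShift_iterate_apply]
  rw [show (-1 + (j + 1 : ℕ) : ℤ) = j by omega]
  refine ⟨fun h i hi => by simpa using edge_eq_of_edge_eq h hi, fun h => h j hj⟩

theorem measure_loop_tail_eq (hinv : ∀ s, μ (loopShift f ⁻¹' s) = μ s)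
    (hcyl : ∀ n c' : ℕ, 1 ≤ n → c' < f n →
      μ {x : LoopShiftSpace f | ∀ i : ℕ, i < n → (x.1 (i : ℤ)).1 = (n, c', i)} = w n)
    (n N : ℕ) :
    μ {x : LoopShiftSpace f | (x.1 (-1)).1.1 = n ∧ N ≤ (x.1 (-1)).1.2.2} =
      (n - N : ℕ) * (f n * w n) := by
  have hE : {x : LoopShiftSpace f | (x.1 (-1)).1.1 = n ∧ N ≤ (x.1 (-1)).1.2.2} =
      ⋃ p ∈ Finset.range (f n) ×ˢ Finset.Ico N n,
        {x : LoopShiftSpace f | (x.1 (-1)).1 = (n, p.1, p.2)} := by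
    ext x
    simp only [Set.mem_ofPred_eq, Set.mem_iUnion, Finset.mem_product, Finset.mem_range,
      Finset.mem_Ico, exists_prop, Prod.exists]
    generalize x.1 (-1) = e
    obtain ⟨⟨m, c', j⟩, hc', hj⟩ := e
    dsimp only at hc' hj ⊢
    simp only [Prod.mk.injEq]
    constructor
    · rintro ⟨rfl, hNj⟩
      exact ⟨c', j, ⟨hc', hNj, hj⟩, rfl, rfl, rfl⟩
    · rintro ⟨_, _, ⟨-, hNj, -⟩, rfl, rfl, rfl⟩
      exact ⟨rfl, hNj⟩
  rw [hE, measure_biUnion_finset (fun p _ q _ hpq => Set.disjoint_left.2 fun x hp hq => hpq ?_)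
    fun _ _ => .of_discrete]
  · rw [Finset.sum_congr rfl fun p hp => measure_edge_eq hinv hcyl
      (Finset.mem_range.1 (Finset.mem_product.1 hp).1)
      (Finset.mem_Ico.1 (Finset.mem_product.1 hp).2).2,
      Finset.sum_const, Finset.card_product, Finset.card_range, Nat.card_Ico, nsmul_eq_mul]
    push_cast
    ring
  · have hpq := hp.symm.trans hq
    simp only [Prod.mk.injEq, true_and] at hpq
    exact Prod.ext hpq.1 hpq.2

theorem measure_tail_eq (hinv : ∀ s, μ (loopShift f ⁻¹' s) = μ s)
    (hcyl : ∀ n c' : ℕ, 1 ≤ n → c' < f n →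
      μ {x : LoopShiftSpace f | ∀ i : ℕ, i < n → (x.1 (i : ℤ)).1 = (n, c', i)} = w n)
    (N : ℕ) :
    μ {x : LoopShiftSpace f | N ≤ (x.1 (-1)).1.2.2} = tailMoment (fun n => f n * w n) N := by
  let E (n : ℕ) : Set (LoopShiftSpace f) := {x | (x.1 (-1)).1.1 = n ∧ N ≤ (x.1 (-1)).1.2.2}
  have hE : {x : LoopShiftSpace f | N ≤ (x.1 (-1)).1.2.2} = ⋃ n, E n := by
    ext x; simp [E]
  have hdisj : Pairwise (Function.onFun Disjoint E) := fun m n hmn =>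
    Set.disjoint_left.2 fun x (hm : x ∈ E m) (hn : x ∈ E n) => hmn (hm.1.symm.trans hn.1)
  rw [hE, measure_iUnion hdisj fun _ => .of_discrete, tailMoment]
  exact tsum_congr (measure_loop_tail_eq hinv hcyl · N)

end LoopShiftSpace

theorem stmt15_general (f : ℕ → ℕ) (lam : ℝ) (c : ℝ) (μ : Measure (LoopShiftSpace f))
    (hlam : 1 < lam)
    (hc : 0 < c)
    (hinv : ∀ s : Set (LoopShiftSpace f), μ (loopShift f ⁻¹' s) = μ s)
    (hcyl : ∀ n c' : ℕ, 1 ≤ n → c' < f n →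
      μ {x : LoopShiftSpace f | ∀ i : ℕ, i < n → (x.1 (i : ℤ)).1 = (n, c', i)} =
        ENNReal.ofReal (c * lam⁻¹ ^ n)) :
    (Filter.atTop.limsup (fun N : ℕ =>
        (μ (Set.univ \ ⋃ k ∈ Finset.Icc 1 N,
            (loopShift f)^[k] '' {x : LoopShiftSpace f | (x.1 0).1.2.2 = 0}))
          ^ (1 / (N : ℝ))) < 1)
    ↔ Filter.atTop.limsup (fun n : ℕ => ((f n : ℝ≥0∞)) ^ (1 / (n : ℝ)))
        < ENNReal.ofReal lam := by
  have hlam₀ : 0 < lam := zero_lt_one.trans hlam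
  have hcyl' (n c' : ℕ) (hn : 1 ≤ n) (hc' : c' < f n) :
      μ {x : LoopShiftSpace f | ∀ i : ℕ, i < n → (x.1 (i : ℤ)).1 = (n, c', i)} =
        ENNReal.ofReal c * (ENNReal.ofReal lam)⁻¹ ^ n := by
    rw [hcyl n c' hn hc', ENNReal.ofReal_mul hc.le, ENNReal.ofReal_pow (inv_nonneg.2 hlam₀.le),
      ENNReal.ofReal_inv_of_pos hlam₀]
  simp only [LoopShiftSpace.compl_iUnion_loopShift_iterate_image,
    LoopShiftSpace.measure_tail_eq hinv hcyl']
  exact ⟨limsup_rpow_lt_of_limsup_tailMoment_rpow_lt_one (ofReal_pos.2 hc).ne' ofReal_ne_top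
      (ofReal_pos.2 hlam₀).ne' ofReal_ne_top,
    limsup_tailMoment_rpow_lt_one_of_limsup_rpow_lt ofReal_ne_top⟩

/-- Let `σ_f` be a positive recurrent loop shift with entropy
`log λ ∈ (0, ∞)` (i.e. `λ > 1`, `Σ f_n λ^{−n} = 1`, `Σ n f_n λ^{−n} < ∞`) and
let `μ` be its measure of maximal entropy: the shift-invariant probability
measure giving each cylinder of a first-return loop of length `n` the measure
`c·λ^{−n}` for a constant `c > 0`.  Let `V` be the cylinder of points whose
`0`-th edge starts at the base vertex.  Then `V` is exponentially filling for
`(σ_f, μ)` — i.e. `μ(S ∖ ∪_{k=1}^N S^k V) → 0` exponentially fast in `N` —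
if and only if `σ_f` is strongly positive recurrent
(`limsup f_n^{1/n} < λ`). -/
theorem stmt15 (f : ℕ → ℕ) (lam : ℝ) (c : ℝ) (μ : Measure (LoopShiftSpace f))
    [IsProbabilityMeasure μ]
    (hf0 : f 0 = 0) (hlam : 1 < lam)
    (hrec : HasSum (fun n : ℕ => (f n : ℝ) * lam⁻¹ ^ n) 1)
    (hposrec : Summable fun n : ℕ => (n : ℝ) * (f n : ℝ) * lam⁻¹ ^ n)
    (hc : 0 < c)
    (hinv : ∀ s : Set (LoopShiftSpace f), μ (loopShift f ⁻¹' s) = μ s)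
    (hcyl : ∀ n c' : ℕ, 1 ≤ n → c' < f n →
      μ {x : LoopShiftSpace f | ∀ i : ℕ, i < n → (x.1 (i : ℤ)).1 = (n, c', i)} =
        ENNReal.ofReal (c * lam⁻¹ ^ n)) :
    (Filter.atTop.limsup (fun N : ℕ =>
        (μ (Set.univ \ ⋃ k ∈ Finset.Icc 1 N,
            (loopShift f)^[k] '' {x : LoopShiftSpace f | (x.1 0).1.2.2 = 0}))
          ^ (1 / (N : ℝ))) < 1)
    ↔ Filter.atTop.limsup (fun n : ℕ => ((f n : ℝ≥0∞)) ^ (1 / (n : ℝ)))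
        < ENNReal.ofReal lam :=
  stmt15_general f lam c μ hlam hc hinv hcyl
end

section
/- Let f = Σ f_n zⁿ with nonnegative integer coefficients and λ = limsup |O_n(σ_f)|^{1/n} with log λ = h(σ_f) > 0 finite. Let (R_n) satisfy 0 ≤ R_n ≤ f_n for all n and limsup R_n^{1/n} < λ, with R_{n₀} < f_{n₀} for some n₀. If the loop shift σ_R (with R_n loops of length n) is strongly positive recurrent, then h(σ_R) < h(σ_f). -/
/-!
Let `Λ` be the growth rate of `loopCount R`, `ρ = Λ⁻¹`, and `F_g(x) = ∑ gₙ xⁿ`.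
If `F_R(y) ≤ 1`, the renewal recursion keeps every `loopCount R n * yⁿ` below `1`, so `Λ ≤ y⁻¹`.
Strong positive recurrence makes `F_R` finite, hence continuous, slightly beyond `ρ`; therefore
`F_R(ρ) ≥ 1`. As `R ≤ f` with strict inequality somewhere, `F_f(ρ) > 1`, and by lower
semicontinuity `F_f(x) > 1` for some `x < ρ`. The renewal identity `T = 1 + F_f T` for the loop
generating function `T` of `f` then gives `T(x) = ∞`, so the growth rate of `loopCount f` is at
least `x⁻¹ > Λ`.
-/

open Filter ENNReal

/-- `loopCount g n` is the number of loops (not necessarily first-return) of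
length `n` at the base vertex of the loop graph with `g m` first-return loops
of length `m`: each loop decomposes uniquely as a concatenation of
first-return loops, giving the renewal recursion
`r_0 = 1`, `r_{n+1} = Σ_{k=0}^{n} g_{k+1}·r_{n-k}`.  The entropy of the loop
shift `σ_g` is `log (limsup (loopCount g n)^{1/n})`. -/
def loopCount (g : ℕ → ℕ) : ℕ → ℕ
  | 0 => 1
  | n + 1 => ∑ k ∈ Finset.range (n + 1), g (k + 1) * loopCount g (n - k)
decreasing_by exact Nat.lt_succ_of_le (Nat.sub_le n k)

open Topology MeasureTheory

noncomputable def growthRate (a : ℕ → ℝ≥0∞) : ℝ≥0∞ :=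
  atTop.limsup fun n => a n ^ (1 / (n : ℝ))

theorem growthRate_mono {a b : ℕ → ℝ≥0∞} (h : a ≤ b) : growthRate a ≤ growthRate b :=
  limsup_le_limsup (.of_forall fun n => ENNReal.rpow_le_rpow (h n) (by positivity))

theorem ENNReal.rpow_one_div_le_iff_le_pow {a b : ℝ≥0∞} {n : ℕ} (hn : n ≠ 0) :
    a ^ (1 / (n : ℝ)) ≤ b ↔ a ≤ b ^ n := by
  rw [one_div, ENNReal.rpow_inv_le_iff (by positivity), ENNReal.rpow_natCast]

theorem growthRate_le_inv_of_mul_pow_le_one {a : ℕ → ℝ≥0∞} {y : ℝ≥0∞}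
    (h : ∀ n, a n * y ^ n ≤ 1) : growthRate a ≤ y⁻¹ := by
  refine limsup_le_of_le (by isBoundedDefault) ((eventually_ne_atTop 0).mono fun n hn => ?_)
  rw [rpow_one_div_le_iff_le_pow hn, ← ENNReal.inv_pow]
  exact ENNReal.le_inv_iff_mul_le.mpr (h n)

theorem tsum_mul_pow_ne_top_of_growthRate_lt {a : ℕ → ℝ≥0∞} {x : ℝ≥0∞}
    (ha : ∀ n, a n ≠ ∞) (h : growthRate a < x⁻¹) : ∑' n, a n * x ^ n ≠ ∞ := by
  obtain ⟨b, hab, hbx⟩ := exists_between h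
  have hx : x ≠ ∞ := by rintro rfl; simp at hbx
  have hbx1 : b * x < 1 := ENNReal.mul_lt_of_lt_div (by rwa [one_div])
  obtain ⟨N, hN⟩ := eventually_atTop.1
    ((eventually_lt_of_limsup_lt hab).and (eventually_ne_atTop 0))
  have hhead : ∑ n ∈ Finset.range N, a n * x ^ n ≠ ∞ :=
    ENNReal.sum_ne_top.2 fun n _ => ENNReal.mul_ne_top (ha n) (pow_ne_top hx)
  have htail : ∑' n, a (n + N) * x ^ (n + N) ≤ ∑' n, (b * x) ^ n :=
    calc ∑' n, a (n + N) * x ^ (n + N) ≤ ∑' n, (b * x) ^ (n + N) := by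
          refine ENNReal.tsum_le_tsum fun n => ?_
          obtain ⟨hlt, hne⟩ := hN (n + N) (Nat.le_add_left N n)
          rw [mul_pow]
          gcongr
          exact (rpow_one_div_le_iff_le_pow hne).1 hlt.le
      _ ≤ ∑' n, (b * x) ^ n := ENNReal.tsum_comp_le_tsum_of_injective (add_left_injective N) _
  rw [← ENNReal.summable.sum_add_tsum_nat_add' (k := N)]
  refine ENNReal.add_ne_top.2 ⟨hhead, ne_top_of_le_ne_top ?_ htail⟩
  rw [ENNReal.tsum_geometric]
  exact ENNReal.inv_ne_top.2 (tsub_pos_of_lt hbx1).ne'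

theorem tsum_mul_pow_lt_tsum_mul_pow {a b : ℕ → ℕ} {x : ℝ≥0∞} {i : ℕ} (hab : a ≤ b)
    (hi : a i < b i) (hx0 : x ≠ 0) (hx : x ≠ ∞) (hfin : ∑' n, (a n : ℝ≥0∞) * x ^ n ≠ ∞) :
    ∑' n, (a n : ℝ≥0∞) * x ^ n < ∑' n, (b n : ℝ≥0∞) * x ^ n :=
  ENNReal.tsum_lt_tsum hfin (fun n => by gcongr; exact hab n)
    ((ENNReal.mul_lt_mul_iff_left (pow_ne_zero _ hx0) (pow_ne_top hx)).2 (Nat.cast_lt.2 hi))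

theorem continuousAt_tsum_mul_pow {a : ℕ → ℝ≥0∞} {x y : ℝ≥0∞} (hxy : x < y)
    (hy : ∑' n, a n * y ^ n ≠ ∞) : ContinuousAt (fun z => ∑' n, a n * z ^ n) x := by
  have ha : ∀ n, a n ≠ ∞ := fun n => (ENNReal.lt_top_of_mul_ne_top_left
    (ne_top_of_le_ne_top hy (ENNReal.le_tsum n)) (pow_ne_zero _ hxy.bot_lt.ne')).ne
  simp only [ContinuousAt, ← lintegral_count]
  refine tendsto_lintegral_filter_of_dominated_convergence (fun n => a n * y ^ n)
    (.of_forall fun _ => .of_discrete) ?_ (by rwa [lintegral_count]) (.of_forall fun n => ?_)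
  · filter_upwards [Iio_mem_nhds hxy] with z hz
    exact .of_forall fun n => by gcongr; exact hz.le
  · exact ENNReal.Tendsto.const_mul ((ENNReal.continuous_pow n).tendsto x) (.inr (ha n))

theorem exists_gt_tsum_mul_pow_lt {a : ℕ → ℝ≥0∞} {x y c : ℝ≥0∞} (hxy : x < y)
    (hy : ∑' n, a n * y ^ n ≠ ∞) (hc : ∑' n, a n * x ^ n < c) :
    ∃ z > x, ∑' n, a n * z ^ n < c := by
  have : (𝓝[>] x).NeBot := nhdsGT_neBot_of_exists_gt ⟨y, hxy⟩
  exact ((continuousAt_tsum_mul_pow hxy hy).eventually (gt_mem_nhds hc)).exists_gt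

theorem exists_lt_lt_tsum_mul_pow {a : ℕ → ℝ≥0∞} {x c : ℝ≥0∞} (ha : ∀ n, a n ≠ ∞) (hx : x ≠ 0)
    (hc : c < ∑' n, a n * x ^ n) : ∃ y < x, c < ∑' n, a n * y ^ n := by
  have hlsc : LowerSemicontinuous fun z => ∑' n, a n * z ^ n := lowerSemicontinuous_tsum fun n =>
    ((ENNReal.continuous_const_mul (ha n)).comp (ENNReal.continuous_pow n)).lowerSemicontinuous
  have : (𝓝[<] x).NeBot := nhdsLT_neBot_of_exists_lt ⟨0, pos_iff_ne_zero.2 hx⟩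
  exact (hlsc x c hc).exists_lt

theorem tsum_antidiagonal_mul {A : Type*} [AddCommMonoid A] [Finset.HasAntidiagonal A]
    (u v : A → ℝ≥0∞) :
    ∑' n, ∑ p ∈ Finset.HasAntidiagonal.antidiagonal n, u p.1 * v p.2 =
      (∑' n, u n) * ∑' n, v n := by
  rw [← ENNReal.tsum_mul_right]
  simp_rw [← ENNReal.tsum_mul_left]
  rw [← ENNReal.tsum_prod, ← Finset.HasAntidiagonal.sigmaAntidiagonalEquivProd.tsum_eq,
    ENNReal.tsum_sigma']
  congr 1 with n
  rw [← Finset.tsum_subtype]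
  rfl

theorem loopCount_mono {g g' : ℕ → ℕ} (h : g ≤ g') : loopCount g ≤ loopCount g' := by
  intro n
  induction n using Nat.strong_induction_on with
  | _ n ih =>
    cases n with
    | zero => simp [loopCount]
    | succ n =>
      rw [loopCount, loopCount]
      exact Finset.sum_le_sum fun k hk =>
        Nat.mul_le_mul (h _) (ih _ (by have := Finset.mem_range.1 hk; omega))

theorem loopCount_succ_mul_pow (g : ℕ → ℕ) (x : ℝ≥0∞) (n : ℕ) :
    (loopCount g (n + 1) : ℝ≥0∞) * x ^ (n + 1) =
      ∑ k ∈ Finset.range (n + 1),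
        (g (k + 1) * x ^ (k + 1)) * (loopCount g (n - k) * x ^ (n - k)) := by
  rw [loopCount, Nat.cast_sum, Finset.sum_mul]
  refine Finset.sum_congr rfl fun k hk => ?_
  rw [show n + 1 = (k + 1) + (n - k) by have := Finset.mem_range.1 hk; omega, pow_add]
  push_cast
  ring

theorem loopCount_mul_pow_le_one {g : ℕ → ℕ} {y : ℝ≥0∞}
    (h : ∑' n, (g n : ℝ≥0∞) * y ^ n ≤ 1) (n : ℕ) : (loopCount g n : ℝ≥0∞) * y ^ n ≤ 1 := by
  induction n using Nat.strong_induction_on with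
  | _ n ih =>
    cases n with
    | zero => simp [loopCount]
    | succ n =>
      calc (loopCount g (n + 1) : ℝ≥0∞) * y ^ (n + 1)
          ≤ ∑ k ∈ Finset.range (n + 1), (g (k + 1) : ℝ≥0∞) * y ^ (k + 1) := by
            rw [loopCount_succ_mul_pow]
            exact Finset.sum_le_sum fun k hk => mul_le_of_le_one_right' (ih _ (by
              have := Finset.mem_range.1 hk; omega))
        _ ≤ ∑' k, (g (k + 1) : ℝ≥0∞) * y ^ (k + 1) := ENNReal.sum_le_tsum _
        _ ≤ ∑' k, (g k : ℝ≥0∞) * y ^ k :=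
            ENNReal.tsum_comp_le_tsum_of_injective (add_left_injective 1) _
        _ ≤ 1 := h

theorem growthRate_loopCount_le_inv {g : ℕ → ℕ} {y : ℝ≥0∞}
    (h : ∑' n, (g n : ℝ≥0∞) * y ^ n ≤ 1) : growthRate (loopCount g ·) ≤ y⁻¹ :=
  growthRate_le_inv_of_mul_pow_le_one (loopCount_mul_pow_le_one h)

theorem tsum_loopCount_mul_pow {g : ℕ → ℕ} (hg : g 0 = 0) (x : ℝ≥0∞) :
    ∑' n, (loopCount g n : ℝ≥0∞) * x ^ n =
      1 + (∑' n, (g n : ℝ≥0∞) * x ^ n) * ∑' n, (loopCount g n : ℝ≥0∞) * x ^ n := by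
  have hcoeff : ∀ m, (loopCount g m : ℝ≥0∞) * x ^ m = (if m = 0 then 1 else 0) +
      ∑ p ∈ Finset.HasAntidiagonal.antidiagonal m,
        (g p.1 * x ^ p.1) * (loopCount g p.2 * x ^ p.2) := by
    rintro (_ | n)
    · simp [loopCount, hg]
    · rw [loopCount_succ_mul_pow, Finset.Nat.sum_antidiagonal_succ,
        Finset.Nat.sum_antidiagonal_eq_sum_range_succ_mk]
      simp [hg]
  conv_lhs => rw [tsum_congr hcoeff]
  rw [ENNReal.tsum_add, tsum_ite_eq,
    tsum_antidiagonal_mul (fun i => (g i : ℝ≥0∞) * x ^ i) fun j => (loopCount g j : ℝ≥0∞) * x ^ j]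

theorem tsum_loopCount_mul_pow_eq_top {g : ℕ → ℕ} (hg : g 0 = 0) {x : ℝ≥0∞}
    (h : 1 ≤ ∑' n, (g n : ℝ≥0∞) * x ^ n) : ∑' n, (loopCount g n : ℝ≥0∞) * x ^ n = ∞ := by
  set T := ∑' n, (loopCount g n : ℝ≥0∞) * x ^ n
  by_contra hT
  have hle : T + 1 ≤ T :=
    calc T + 1 ≤ 1 + (∑' n, (g n : ℝ≥0∞) * x ^ n) * T := by
          rw [add_comm]; gcongr; exact le_mul_of_one_le_left' h
      _ = T := (tsum_loopCount_mul_pow hg x).symm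
  exact (ENNReal.lt_add_right hT one_ne_zero).not_ge hle

theorem inv_le_growthRate_loopCount {g : ℕ → ℕ} (hg : g 0 = 0) {x : ℝ≥0∞}
    (h : 1 ≤ ∑' n, (g n : ℝ≥0∞) * x ^ n) : x⁻¹ ≤ growthRate (loopCount g ·) := by
  by_contra! hlt
  exact tsum_mul_pow_ne_top_of_growthRate_lt (fun _ => natCast_ne_top _) hlt
    (tsum_loopCount_mul_pow_eq_top hg h)

theorem one_le_tsum_mul_pow_inv_growthRate_loopCount {g : ℕ → ℕ} {y : ℝ≥0∞}
    (hy : (growthRate (loopCount g ·))⁻¹ < y) (hfin : ∑' n, (g n : ℝ≥0∞) * y ^ n ≠ ∞) :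
    1 ≤ ∑' n, (g n : ℝ≥0∞) * (growthRate (loopCount g ·))⁻¹ ^ n := by
  by_contra! hlt
  obtain ⟨z, hz, hz_lt⟩ := exists_gt_tsum_mul_pow_lt hy hfin hlt
  have := (growthRate_loopCount_le_inv hz_lt.le).trans_lt (ENNReal.inv_lt_inv.2 hz)
  rw [inv_inv] at this
  exact lt_irrefl _ this

theorem stmt19_general (f R : ℕ → ℕ) (lam : ℝ)
    (hf0 : f 0 = 0)
    (hent : Filter.atTop.limsup
        (fun n : ℕ => ((loopCount f n : ℝ≥0∞)) ^ (1 / (n : ℝ)))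
      = ENNReal.ofReal lam)
    (hRf : ∀ n, R n ≤ f n)
    (hn0 : ∃ n0, R n0 < f n0)
    (hSPR : Filter.atTop.limsup (fun n : ℕ => ((R n : ℝ≥0∞)) ^ (1 / (n : ℝ)))
        < Filter.atTop.limsup
            (fun n : ℕ => ((loopCount R n : ℝ≥0∞)) ^ (1 / (n : ℝ)))) :
    Filter.atTop.limsup (fun n : ℕ => ((loopCount R n : ℝ≥0∞)) ^ (1 / (n : ℝ)))
      < ENNReal.ofReal lam := by
  obtain ⟨n₀, hn₀⟩ := hn0
  change growthRate (R ·) < growthRate (loopCount R ·) at hSPR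
  change growthRate (loopCount f ·) = _ at hent
  change growthRate (loopCount R ·) < _
  set L := growthRate (loopCount R ·)
  have hL_top : L ≠ ∞ := ((growthRate_mono fun n => Nat.cast_le.2 (loopCount_mono hRf n)).trans_eq
    hent |>.trans_lt ofReal_lt_top).ne
  have hL0 : L ≠ 0 := (pos_of_gt hSPR).ne'
  obtain ⟨B, hRB, hBL⟩ := exists_between hSPR
  have hLB : L⁻¹ < B⁻¹ := ENNReal.inv_lt_inv.2 hBL
  have hRB_fin : ∑' n, (R n : ℝ≥0∞) * B⁻¹ ^ n ≠ ∞ :=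
    tsum_mul_pow_ne_top_of_growthRate_lt (fun _ => natCast_ne_top _) (by rwa [inv_inv])
  have hR_ge := one_le_tsum_mul_pow_inv_growthRate_loopCount hLB hRB_fin
  have hRf_lt := tsum_mul_pow_lt_tsum_mul_pow hRf hn₀ (ENNReal.inv_ne_zero.2 hL_top)
    (ENNReal.inv_ne_top.2 hL0) (ne_top_of_le_ne_top hRB_fin (ENNReal.tsum_le_tsum fun n => by gcongr))
  obtain ⟨x, hxL, hx⟩ := exists_lt_lt_tsum_mul_pow (fun _ => natCast_ne_top _)
    (ENNReal.inv_ne_zero.2 hL_top) (hR_ge.trans_lt hRf_lt)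
  calc L = L⁻¹⁻¹ := (inv_inv L).symm
    _ < x⁻¹ := ENNReal.inv_lt_inv.2 hxL
    _ ≤ growthRate (loopCount f ·) := inv_le_growthRate_loopCount hf0 hx.le
    _ = ENNReal.ofReal lam := hent

/-- Let `f = Σ f_n zⁿ` have nonnegative integer coefficients and
let `λ = limsup (loopCount f n)^{1/n}` with `h(σ_f) = log λ > 0` finite
(`λ > 1`).  Let `(R_n)` satisfy `0 ≤ R_n ≤ f_n`, `limsup R_n^{1/n} < λ`, and
`R_{n₀} < f_{n₀}` for some `n₀`.  If the loop shift `σ_R` is strongly positive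
recurrent (`limsup R_n^{1/n} < λ_R` where `log λ_R = h(σ_R)`), then
`h(σ_R) < h(σ_f)`. -/
theorem stmt19 (f R : ℕ → ℕ) (lam : ℝ)
    (hf0 : f 0 = 0) (hR0 : R 0 = 0)
    (hlam : 1 < lam)
    (hent : Filter.atTop.limsup
        (fun n : ℕ => ((loopCount f n : ℝ≥0∞)) ^ (1 / (n : ℝ)))
      = ENNReal.ofReal lam)
    (hRf : ∀ n, R n ≤ f n)
    (hRlim : Filter.atTop.limsup (fun n : ℕ => ((R n : ℝ≥0∞)) ^ (1 / (n : ℝ)))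
        < ENNReal.ofReal lam)
    (hn0 : ∃ n0, R n0 < f n0)
    (hSPR : Filter.atTop.limsup (fun n : ℕ => ((R n : ℝ≥0∞)) ^ (1 / (n : ℝ)))
        < Filter.atTop.limsup
            (fun n : ℕ => ((loopCount R n : ℝ≥0∞)) ^ (1 / (n : ℝ)))) :
    Filter.atTop.limsup (fun n : ℕ => ((loopCount R n : ℝ≥0∞)) ^ (1 / (n : ℝ)))
      < ENNReal.ofReal lam :=
  stmt19_general f R lam hf0 hent hRf hn0 hSPR
end
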